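/- arXiv:2501.06152 — 6 statements merged into one kernel-verified Lean document; each statement's English description precedes it below -/
import Mathlib

section
/- Let a, b ≥ -1/2 with 0 < |a - b| ≤ 1. Then there exists a constant C₂, depending only on a and b, such that for every integer k ≥ 10 and all 0 < y < x, the partial derivative in x of the kernel satisfies |∂K_{a+k}^{b+k}(x,y)/∂x| ≤ C₂ / (x - y)². -/
/-!
Write `α = (a - b) / 2` and `μ = (a + b) / 2 + k`. Differentiating under the integral sign, the
derivative is bounded by a multiple of `μ² y^(μ+α+1/2) x^(μ-α+3/2) J`, where
`J = ∫₀¹ s^α (1-s)^(μ-1) (x² - y² s)^(-(μ+2)) ds`; by homogeneity this is `r^(μ+α+1/2) J₁ / x²`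
with `r = y / x` and `J₁` the same integral at `x = 1`, `y = r`.
Splitting `1 ≤ 4 (s^(1-α) + (1-s)^(1-α))` and substituting `v = (1-r²) s / (1-r² s)` turns `J₁`
into two Beta integrals, each at most `Γ(c+1) / d^(c+1)` because `(1-v)^d ≤ e^(-dv)`. The first
is `O(μ⁻² (1-r)⁻²)`; the second is only `O(μ^(-1-α) (1-r)^(-1-α))`, and the missing decay comes
from the factor `r^μ` through `μ^(1-α) r^μ (1-r)^(1-α) ≤ 3`.
-/

open MeasureTheory Real Set

/-- The Hankel transplantation kernel `K_{a+k}^{b+k}(x,y)` in the region `0 < y < x`,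
given by its convergent integral representation. -/
noncomputable def transplantKernel (a b : ℝ) (k : ℕ) (x y : ℝ) : ℝ :=
  (((a + b) / 2 + k) / (Real.Gamma ((b - a) / 2) * Real.Gamma ((a - b + 2) / 2))) *
    x ^ (b + k + 1 / 2) * y ^ (a + k + 1 / 2) *
    ∫ s in Set.Ioo (0 : ℝ) 1,
      s ^ ((a - b) / 2) * (1 - s) ^ ((a + b) / 2 + k - 1) /
        (x ^ 2 - y ^ 2 * s) ^ ((a + b) / 2 + k + 1)

lemma rpow_mul_exp_neg_le_three {t θ : ℝ} (ht : 0 ≤ t) (hθ₀ : 0 ≤ θ) (hθ₂ : θ ≤ 2) :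
    t ^ θ * exp (-t) ≤ 3 := by
  have hpow : t ^ θ ≤ 1 + t ^ 2 := by
    rcases le_or_gt t 1 with h | h
    · linarith [rpow_le_one ht h hθ₀, sq_nonneg t]
    · calc t ^ θ ≤ t ^ (2 : ℝ) := rpow_le_rpow_of_exponent_le h.le hθ₂
        _ ≤ 1 + t ^ 2 := by rw [rpow_two]; linarith
  have hsq : t ^ 2 ≤ 2 * exp t := by
    have := pow_div_factorial_le_exp t ht 2
    norm_num [Nat.factorial] at this
    linarith
  calc t ^ θ * exp (-t) ≤ (1 + 2 * exp t) * exp (-t) := by gcongr; linarith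
    _ = exp (-t) + 2 := by rw [add_mul, mul_assoc, ← exp_add]; simp
    _ ≤ 3 := by linarith [exp_le_one_iff.mpr (neg_nonpos.mpr ht)]

lemma rpow_mul_rpow_mul_one_sub_rpow_le_three {μ r θ : ℝ} (hμ : 0 ≤ μ) (hr₀ : 0 ≤ r)
    (hr₁ : r ≤ 1) (hθ₀ : 0 ≤ θ) (hθ₂ : θ ≤ 2) : μ ^ θ * r ^ μ * (1 - r) ^ θ ≤ 3 := by
  have hr : r ^ μ ≤ exp (-(μ * (1 - r))) := calc
    r ^ μ ≤ exp (-(1 - r)) ^ μ :=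
      rpow_le_rpow hr₀ (by linarith [one_sub_le_exp_neg (1 - r)]) hμ
    _ = exp (-(μ * (1 - r))) := by rw [← exp_mul]; ring_nf
  calc μ ^ θ * r ^ μ * (1 - r) ^ θ = (μ * (1 - r)) ^ θ * r ^ μ := by
        rw [mul_rpow hμ (by linarith)]; ring
    _ ≤ (μ * (1 - r)) ^ θ * exp (-(μ * (1 - r))) := by gcongr
    _ ≤ 3 := rpow_mul_exp_neg_le_three (mul_nonneg hμ (by linarith)) hθ₀ hθ₂

lemma one_le_four_mul_rpow_add_one_sub_rpow {s θ : ℝ} (hs₀ : 0 ≤ s) (hs₁ : s ≤ 1)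
    (hθ₀ : 0 ≤ θ) (hθ₂ : θ ≤ 2) : 1 ≤ 4 * (s ^ θ + (1 - s) ^ θ) := by
  have key : ∀ u : ℝ, 1 / 2 ≤ u → 1 / 4 ≤ u ^ θ := fun u hu => calc
    (1 : ℝ) / 4 = (1 / 2) ^ (2 : ℝ) := by norm_num [rpow_two]
    _ ≤ (1 / 2) ^ θ := rpow_le_rpow_of_exponent_ge (by norm_num) (by norm_num) hθ₂
    _ ≤ u ^ θ := rpow_le_rpow (by norm_num) hu hθ₀
  rcases le_total s (1 / 2) with h | h
  · linarith [key (1 - s) (by linarith), rpow_nonneg hs₀ θ]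
  · linarith [key s h, rpow_nonneg (sub_nonneg.mpr hs₁) θ]

lemma integral_rpow_mul_one_sub_rpow_le {c d : ℝ} (hc : -1 < c) (hd : 0 < d) :
    ∫ v in Ioo (0 : ℝ) 1, v ^ c * (1 - v) ^ d ≤ Gamma (c + 1) / d ^ (c + 1) := by
  have hint : IntegrableOn (fun v : ℝ => v ^ c * exp (-(d * v))) (Ioi 0) := by
    refine (integrableOn_rpow_mul_exp_neg_mul_rpow hc one_pos hd).congr_fun
      (fun v _ => ?_) measurableSet_Ioi
    simp only [rpow_one, neg_mul]
  have hnonneg : ∀ v ∈ Ioi (0 : ℝ), 0 ≤ v ^ c * exp (-(d * v)) :=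
    fun v hv => mul_nonneg (rpow_nonneg (le_of_lt hv) c) (exp_pos _).le
  calc ∫ v in Ioo (0 : ℝ) 1, v ^ c * (1 - v) ^ d
      ≤ ∫ v in Ioo (0 : ℝ) 1, v ^ c * exp (-(d * v)) := by
        refine integral_mono_of_nonneg ?_ (hint.mono_set Ioo_subset_Ioi_self) ?_ <;>
          filter_upwards [ae_restrict_mem measurableSet_Ioo] with v ⟨hv₀, hv₁⟩
        · exact mul_nonneg (rpow_nonneg hv₀.le c) (rpow_nonneg (by linarith) d)
        · gcongr
          calc (1 - v) ^ d ≤ exp (-v) ^ d := rpow_le_rpow (by linarith) (one_sub_le_exp_neg v) hd.le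
            _ = exp (-(d * v)) := by rw [← exp_mul]; ring_nf
    _ ≤ ∫ v in Ioi (0 : ℝ), v ^ c * exp (-(d * v)) :=
        setIntegral_mono_set hint (ae_restrict_of_forall_mem measurableSet_Ioi hnonneg)
          Ioo_subset_Ioi_self.eventuallyLE
    _ = Gamma (c + 1) / d ^ (c + 1) := by
        rw [← add_sub_cancel_right c 1, integral_rpow_mul_exp_neg_mul_Ioi (by linarith) hd,
          add_sub_cancel_right, one_div, inv_rpow hd.le, inv_mul_eq_div]

lemma hasDerivAt_div_rpow_sq_sub {e y s t : ℝ} (hQ : 0 < t ^ 2 - y ^ 2 * s) (N : ℝ) :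
    HasDerivAt (fun t => N / (t ^ 2 - y ^ 2 * s) ^ e)
      (-(2 * t * e) * (N / (t ^ 2 - y ^ 2 * s) ^ (e + 1))) t := by
  have hQe := ((hasDerivAt_pow 2 t).sub_const (y ^ 2 * s)).rpow_const (p := e) (Or.inl hQ.ne')
  refine ((hasDerivAt_const t N).div hQe (rpow_pos_of_pos hQ e).ne').congr_deriv ?_
  have hsq : ((t ^ 2 - y ^ 2 * s) ^ e) ^ 2 =
      (t ^ 2 - y ^ 2 * s) ^ (e + 1) * (t ^ 2 - y ^ 2 * s) ^ (e - 1) := by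
    rw [← rpow_add hQ, ← rpow_natCast, ← rpow_mul hQ.le]; ring_nf
  have := rpow_pos_of_pos hQ (e + 1)
  have := rpow_pos_of_pos hQ (e - 1)
  rw [hsq]
  field_simp
  ring

/-- With `α = (a - b) / 2`, `μ = (a + b) / 2 + k` and `G = Γ((b - a) / 2) Γ((a - b + 2) / 2)`,
`transplantKernel a b k x y = μ / G * x ^ (μ - α + 1/2) * y ^ (μ + α + 1/2) * I` where
`I = kernelIntegral α (μ - 1) (μ + 1) (x ^ 2) (y ^ 2)`. -/
noncomputable def kernelIntegral (c d e A C : ℝ) : ℝ :=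
  ∫ s in Ioo (0 : ℝ) 1, s ^ c * (1 - s) ^ d / (A - C * s) ^ e

section KernelIntegral

variable {c d e A C : ℝ}

lemma sub_le_sub_mul_of_mem_Ioo {s : ℝ} (hs : s ∈ Ioo (0 : ℝ) 1) (hC : 0 ≤ C) :
    A - C ≤ A - C * s := by
  nlinarith [hs.2]

lemma kernelIntegrand_nonneg {s : ℝ} (hs : s ∈ Ioo (0 : ℝ) 1) (hC : 0 ≤ C) (hCA : C < A) :
    0 ≤ s ^ c * (1 - s) ^ d / (A - C * s) ^ e := by
  have := sub_le_sub_mul_of_mem_Ioo (A := A) hs hC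
  have := hs.2
  exact div_nonneg (mul_nonneg (rpow_nonneg hs.1.le c) (rpow_nonneg (by linarith) d))
    (rpow_nonneg (by linarith) e)

lemma integrableOn_kernelIntegrand (hc : -1 < c) (hd : 0 ≤ d) (he : 0 ≤ e) (hC : 0 ≤ C)
    (hCA : C < A) :
    IntegrableOn (fun s => s ^ c * (1 - s) ^ d / (A - C * s) ^ e) (Ioo (0 : ℝ) 1) := by
  refine Integrable.mono' (((intervalIntegral.integrableOn_Ioo_rpow_iff one_pos).mpr hc).const_mul
    ((A - C) ^ e)⁻¹) (Measurable.aestronglyMeasurable (by fun_prop)) ?_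
  filter_upwards [ae_restrict_mem measurableSet_Ioo] with s hs
  have hQ := sub_le_sub_mul_of_mem_Ioo (A := A) hs hC
  have hs₁ := hs.2
  rw [norm_of_nonneg (kernelIntegrand_nonneg hs hC hCA)]
  calc s ^ c * (1 - s) ^ d / (A - C * s) ^ e ≤ s ^ c * 1 / (A - C) ^ e := by
        have hsc := rpow_nonneg hs.1.le c
        exact div_le_div₀ (by positivity)
          (mul_le_mul_of_nonneg_left (rpow_le_one (by linarith) (by linarith [hs.1]) hd) hsc)
          (rpow_pos_of_pos (by linarith) e) (rpow_le_rpow (by linarith) hQ he)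
    _ = ((A - C) ^ e)⁻¹ * s ^ c := by ring

lemma kernelIntegral_nonneg (hC : 0 ≤ C) (hCA : C < A) : 0 ≤ kernelIntegral c d e A C :=
  setIntegral_nonneg measurableSet_Ioo fun _ hs => kernelIntegrand_nonneg hs hC hCA

lemma kernelIntegral_le_mul_kernelIntegral_add_one (hc : -1 < c) (hd : 0 ≤ d) (he : 0 ≤ e)
    (hC : 0 ≤ C) (hCA : C < A) :
    kernelIntegral c d e A C ≤ A * kernelIntegral c d (e + 1) A C := by
  rw [kernelIntegral, kernelIntegral, ← integral_const_mul]
  refine integral_mono_of_nonneg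
    (ae_restrict_of_forall_mem measurableSet_Ioo fun _ hs => kernelIntegrand_nonneg hs hC hCA)
    ((integrableOn_kernelIntegrand hc hd (by linarith) hC hCA).const_mul A)
    (ae_restrict_of_forall_mem measurableSet_Ioo fun s hs => ?_)
  have hQ : 0 < A - C * s := by linarith [sub_le_sub_mul_of_mem_Ioo (A := A) hs hC]
  have hQA : A - C * s ≤ A := by nlinarith [hs.1]
  have hnum : 0 ≤ s ^ c * (1 - s) ^ d := mul_nonneg (rpow_nonneg hs.1.le c)
    (rpow_nonneg (by linarith [hs.2]) d)
  have hQe : 0 < (A - C * s) ^ e := rpow_pos_of_pos hQ e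
  calc s ^ c * (1 - s) ^ d / (A - C * s) ^ e
      ≤ s ^ c * (1 - s) ^ d / (A - C * s) ^ e * (A / (A - C * s)) :=
        le_mul_of_one_le_right (by positivity) ((one_le_div hQ).mpr hQA)
    _ = A * (s ^ c * (1 - s) ^ d / (A - C * s) ^ (e + 1)) := by
        rw [rpow_add_one hQ.ne']; field_simp

lemma kernelIntegral_eq_inv_rpow_mul (hA : 0 < A) (hCA : C ≤ A) :
    kernelIntegral c d e A C = (A ^ e)⁻¹ * kernelIntegral c d e 1 (C / A) := by
  rw [kernelIntegral, kernelIntegral, ← integral_const_mul]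
  refine setIntegral_congr_fun measurableSet_Ioo fun s hs => ?_
  have hCA' : C / A ≤ 1 := (div_le_one hA).mpr hCA
  have hQ : 0 ≤ 1 - C / A * s := by nlinarith [hs.1, hs.2]
  rw [show A - C * s = A * (1 - C / A * s) by field_simp, mul_rpow hA.le hQ, ← div_div,
    div_right_comm, inv_mul_eq_div]

lemma kernelIntegral_le_four_mul_add (hc : -1 < c) (hc₁ : c ≤ 1) (hd : 0 ≤ d) (he : 0 ≤ e)
    (hC : 0 ≤ C) (hCA : C < A) :
    kernelIntegral c d e A C ≤
      4 * (kernelIntegral 1 d e A C + kernelIntegral c (d + (1 - c)) e A C) := by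
  rw [kernelIntegral, kernelIntegral, kernelIntegral,
    ← integral_add (integrableOn_kernelIntegrand (by norm_num) hd he hC hCA)
      (integrableOn_kernelIntegrand hc (by linarith) he hC hCA), ← integral_const_mul]
  refine integral_mono_of_nonneg
    (ae_restrict_of_forall_mem measurableSet_Ioo fun _ hs => kernelIntegrand_nonneg hs hC hCA)
    (((integrableOn_kernelIntegrand (by norm_num) hd he hC hCA).add
      (integrableOn_kernelIntegrand hc (by linarith) he hC hCA)).const_mul 4)
    (ae_restrict_of_forall_mem measurableSet_Ioo fun s ⟨hs₀, hs₁⟩ => ?_)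
  have hs : s ^ c * s ^ (1 - c) = s ^ (1 : ℝ) := by rw [← rpow_add hs₀]; ring_nf
  have hs' : (1 - s) ^ d * (1 - s) ^ (1 - c) = (1 - s) ^ (d + (1 - c)) :=
    (rpow_add (by linarith) _ _).symm
  calc s ^ c * (1 - s) ^ d / (A - C * s) ^ e
      ≤ s ^ c * (1 - s) ^ d / (A - C * s) ^ e * (4 * (s ^ (1 - c) + (1 - s) ^ (1 - c))) :=
        le_mul_of_one_le_right (kernelIntegrand_nonneg ⟨hs₀, hs₁⟩ hC hCA)
          (one_le_four_mul_rpow_add_one_sub_rpow hs₀.le hs₁.le (by linarith) (by linarith))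
    _ = 4 * (s ^ (1 : ℝ) * (1 - s) ^ d / (A - C * s) ^ e +
          s ^ c * (1 - s) ^ (d + (1 - c)) / (A - C * s) ^ e) := by
        rw [← hs, ← hs']; ring

lemma bijOn_Ioo_div_one_sub_mul (hC : C < 1) :
    BijOn (fun s => (1 - C) * s / (1 - C * s)) (Ioo 0 1) (Ioo 0 1) := by
  refine InvOn.bijOn (f' := fun v => v / (1 - C + C * v)) ⟨fun s ⟨hs₀, hs₁⟩ => ?_,
    fun v ⟨hv₀, hv₁⟩ => ?_⟩ (fun s ⟨hs₀, hs₁⟩ => ⟨?_, ?_⟩) (fun v ⟨hv₀, hv₁⟩ => ⟨?_, ?_⟩)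
  · have : 0 < 1 - C * s := by nlinarith
    have : 0 < 1 - C := by linarith
    field_simp
    ring
  · have hD : 0 < 1 - C + C * v := by nlinarith
    have hC' : 1 - C ≠ 0 := by linarith
    dsimp only
    rw [show 1 - C * (v / (1 - C + C * v)) = (1 - C) / (1 - C + C * v) by field_simp; ring]
    field_simp
  · have : 0 < 1 - C * s := by nlinarith
    exact div_pos (mul_pos (by linarith) hs₀) this
  · have : 0 < 1 - C * s := by nlinarith
    rw [div_lt_one this]; nlinarith
  · have : 0 < 1 - C + C * v := by nlinarith
    exact div_pos hv₀ this
  · have : 0 < 1 - C + C * v := by nlinarith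
    rw [div_lt_one this]; nlinarith

lemma kernelIntegral_one_eq_inv_rpow_mul_integral (hC : C < 1) :
    kernelIntegral c d (c + d + 2) 1 C =
      ((1 - C) ^ (c + 1))⁻¹ * ∫ v in Ioo (0 : ℝ) 1, v ^ c * (1 - v) ^ d := by
  have hQ : ∀ s ∈ Ioo (0 : ℝ) 1, 0 < 1 - C * s := fun s ⟨hs₀, hs₁⟩ => by nlinarith
  have hC' : 0 < 1 - C := by linarith
  have hderiv : ∀ s ∈ Ioo (0 : ℝ) 1, HasDerivWithinAt (fun s => (1 - C) * s / (1 - C * s))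
      ((1 - C) / (1 - C * s) ^ 2) (Ioo 0 1) s := fun s hs => by
    have := ((hasDerivAt_id' s).const_mul (1 - C)).fun_div
      (HasDerivAt.const_sub 1 ((hasDerivAt_id' s).const_mul C)) (hQ s hs).ne'
    exact (this.congr_deriv (by ring)).hasDerivWithinAt
  have hbij := bijOn_Ioo_div_one_sub_mul hC
  have hcov := integral_image_eq_integral_abs_deriv_smul measurableSet_Ioo hderiv hbij.injOn
    (fun v => v ^ c * (1 - v) ^ d)
  rw [hbij.image_eq] at hcov
  rw [hcov, ← integral_const_mul, kernelIntegral]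
  refine setIntegral_congr_fun measurableSet_Ioo fun s hs => ?_
  have hQs := hQ s hs
  have hs₀ := hs.1
  have hs₁ : 0 < 1 - s := by linarith [hs.2]
  rw [show 1 - (1 - C) * s / (1 - C * s) = (1 - s) / (1 - C * s) by field_simp; ring,
    abs_of_pos (by positivity), smul_eq_mul, div_rpow (by positivity) hQs.le,
    div_rpow hs₁.le hQs.le, mul_rpow hC'.le hs₀.le, rpow_add hQs, rpow_add hQs, rpow_add hC',
    rpow_one, rpow_two]
  have := rpow_pos_of_pos hC' c
  have := rpow_pos_of_pos hQs c
  have := rpow_pos_of_pos hQs d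
  field_simp

lemma hasDerivAt_kernelIntegral {x y : ℝ} (hc : -1 < c) (hd : 0 ≤ d) (he : 0 ≤ e)
    (hy : 0 ≤ y) (hyx : y < x) :
    HasDerivAt (fun t => kernelIntegral c d e (t ^ 2) (y ^ 2))
      (-(2 * x * e) * kernelIntegral c d (e + 1) (x ^ 2) (y ^ 2)) x := by
  set δ := ((x + y) / 2) ^ 2 - y ^ 2 with hδ_def
  have hδ : 0 < δ := by nlinarith
  have hQ : ∀ t ∈ Ioo ((x + y) / 2) (2 * x), ∀ s ∈ Ioo (0 : ℝ) 1, δ ≤ t ^ 2 - y ^ 2 * s :=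
    fun t ht s hs => by nlinarith [ht.1, hs.1, hs.2, sq_nonneg y]
  have key := hasDerivAt_integral_of_dominated_loc_of_deriv_le (x₀ := x)
    (μ := volume.restrict (Ioo 0 1))
    (F := fun t s => s ^ c * (1 - s) ^ d / (t ^ 2 - y ^ 2 * s) ^ e)
    (F' := fun t s => -(2 * t * e) * (s ^ c * (1 - s) ^ d / (t ^ 2 - y ^ 2 * s) ^ (e + 1)))
    (bound := fun s => 4 * x * e * (δ ^ (e + 1))⁻¹ * s ^ c)
    (Ioo_mem_nhds (a := (x + y) / 2) (b := 2 * x) (by linarith) (by linarith))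
    (Filter.Eventually.of_forall fun t => Measurable.aestronglyMeasurable (by fun_prop))
    (integrableOn_kernelIntegrand hc hd he (sq_nonneg y) (by nlinarith))
    (Measurable.aestronglyMeasurable (by fun_prop)) ?_
    (((intervalIntegral.integrableOn_Ioo_rpow_iff one_pos).mpr hc).const_mul _) ?_
  · simpa only [kernelIntegral, integral_const_mul] using key.2
  · filter_upwards [ae_restrict_mem measurableSet_Ioo] with s hs t ht
    have hQt := hQ t ht s hs
    have ht₀ : 0 < t := by linarith [ht.1]
    have hsc := rpow_nonneg hs.1.le c
    have hnum : s ^ c * (1 - s) ^ d ≤ s ^ c * 1 :=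
      mul_le_mul_of_nonneg_left (rpow_le_one (by linarith [hs.2]) (by linarith [hs.1]) hd) hsc
    have hF := kernelIntegrand_nonneg (c := c) (d := d) (e := e + 1) hs (sq_nonneg y)
      (show y ^ 2 < t ^ 2 by nlinarith [ht.1])
    rw [norm_mul, norm_neg, norm_of_nonneg (by positivity), norm_of_nonneg hF]
    calc 2 * t * e * (s ^ c * (1 - s) ^ d / (t ^ 2 - y ^ 2 * s) ^ (e + 1))
        ≤ 4 * x * e * (s ^ c * 1 / δ ^ (e + 1)) :=
          mul_le_mul (by nlinarith [ht.2]) (div_le_div₀ (by positivity) hnum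
            (rpow_pos_of_pos hδ _) (rpow_le_rpow hδ.le hQt (by linarith))) hF (by nlinarith)
      _ = 4 * x * e * (δ ^ (e + 1))⁻¹ * s ^ c := by ring
  · filter_upwards [ae_restrict_mem measurableSet_Ioo] with s hs t ht
    exact hasDerivAt_div_rpow_sq_sub (by linarith [hQ t ht s hs]) _

lemma kernelIntegral_one_le (hc : -1 < c) (hd : 0 < d) (hC : C < 1) :
    kernelIntegral c d (c + d + 2) 1 C ≤ Gamma (c + 1) / (d ^ (c + 1) * (1 - C) ^ (c + 1)) := by
  rw [kernelIntegral_one_eq_inv_rpow_mul_integral hC, mul_comm (d ^ (c + 1)), ← div_div,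
    div_eq_inv_mul _ ((1 - C) ^ (c + 1)), mul_div_assoc]
  exact mul_le_mul_of_nonneg_left (integral_rpow_mul_one_sub_rpow_le hc hd)
    (inv_nonneg.mpr (rpow_nonneg (sub_nonneg.mpr hC.le) _))

end KernelIntegral

section Estimates

variable {α μ r : ℝ}

lemma mul_add_one_div_rpow_le (hα₀ : -1 ≤ α) (hα₁ : α ≤ 1) (hμ : 2 ≤ μ) :
    μ * (μ + 1) / (μ - α) ^ (α + 1) ≤ 2 ^ (α + 2) * μ ^ (1 - α) := by
  have hμ₀ : 0 < μ := by linarith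
  have hhalf : (μ / 2) ^ (α + 1) ≤ (μ - α) ^ (α + 1) :=
    rpow_le_rpow (by linarith) (by linarith) (by linarith)
  have hsplit : 2 ^ (α + 2) * μ ^ (1 - α) * (μ / 2) ^ (α + 1) = 2 * μ ^ 2 := by
    rw [div_rpow hμ₀.le zero_le_two, show α + 2 = 1 + (α + 1) by ring, rpow_add two_pos,
      rpow_one, mul_assoc, mul_assoc, ← mul_div_assoc, ← rpow_add hμ₀,
      show 1 - α + (α + 1) = 2 by ring, rpow_two]
    have := rpow_pos_of_pos two_pos (α + 1)
    field_simp
  rw [div_le_iff₀ (rpow_pos_of_pos (by linarith) _)]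
  calc μ * (μ + 1) ≤ 2 * μ ^ 2 := by nlinarith
    _ = 2 ^ (α + 2) * μ ^ (1 - α) * (μ / 2) ^ (α + 1) := hsplit.symm
    _ ≤ 2 ^ (α + 2) * μ ^ (1 - α) * (μ - α) ^ (α + 1) := by gcongr

lemma mul_kernelIntegral_one_le (hμ : 5 ≤ μ) (hr₀ : 0 ≤ r) (hr₁ : r < 1) :
    μ * (μ + 1) * kernelIntegral 1 (μ - 1) (μ + 2) 1 (r ^ 2) ≤ 2 / (1 - r) ^ 2 := by
  have hbeta := kernelIntegral_one_le (c := 1) (d := μ - 1) (C := r ^ 2) (by norm_num)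
    (by linarith) (by nlinarith)
  rw [show (1 : ℝ) + (μ - 1) + 2 = μ + 2 by ring, show (1 : ℝ) + 1 = 2 by norm_num, Gamma_two,
    rpow_two, rpow_two] at hbeta
  have h1r : 0 < 1 - r := by linarith
  have hr : (1 - r) ^ 2 ≤ (1 - r ^ 2) ^ 2 := pow_le_pow_left₀ h1r.le (by nlinarith) 2
  have hμ' : μ * (μ + 1) ≤ 2 * (μ - 1) ^ 2 := by nlinarith
  calc μ * (μ + 1) * kernelIntegral 1 (μ - 1) (μ + 2) 1 (r ^ 2)
      ≤ μ * (μ + 1) * (1 / ((μ - 1) ^ 2 * (1 - r) ^ 2)) := by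
        refine mul_le_mul_of_nonneg_left (hbeta.trans ?_) (by positivity)
        have : 0 < μ - 1 := by linarith
        gcongr
    _ ≤ 2 * (μ - 1) ^ 2 * (1 / ((μ - 1) ^ 2 * (1 - r) ^ 2)) := by gcongr
    _ = 2 / (1 - r) ^ 2 := by
        have : μ - 1 ≠ 0 := by linarith
        field_simp

lemma mul_rpow_mul_kernelIntegral_le (hα₀ : -1 < α) (hα₁ : α ≤ 1) (hμ : 2 ≤ μ) (hr₀ : 0 ≤ r)
    (hr₁ : r < 1) :
    μ * (μ + 1) * r ^ μ * kernelIntegral α (μ - α) (μ + 2) 1 (r ^ 2) ≤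
      3 * 2 ^ (α + 2) * Gamma (α + 1) / (1 - r) ^ 2 := by
  have hbeta := kernelIntegral_one_le (c := α) (d := μ - α) (C := r ^ 2) hα₀ (by linarith)
    (by nlinarith)
  rw [show α + (μ - α) + 2 = μ + 2 by ring] at hbeta
  have h1r : 0 < 1 - r := by linarith
  have hμα := rpow_pos_of_pos (show 0 < μ - α by linarith) (α + 1)
  have h1rα := rpow_pos_of_pos h1r (α + 1)
  have hΓ : 0 < Gamma (α + 1) := Gamma_pos_of_pos (by linarith)
  have hsq : (1 - r) ^ (α + 1) * (1 - r) ^ (1 - α) = (1 - r) ^ 2 := by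
    rw [← rpow_add h1r, show α + 1 + (1 - α) = 2 by ring, rpow_two]
  calc μ * (μ + 1) * r ^ μ * kernelIntegral α (μ - α) (μ + 2) 1 (r ^ 2)
      ≤ μ * (μ + 1) * r ^ μ * (Gamma (α + 1) / ((μ - α) ^ (α + 1) * (1 - r) ^ (α + 1))) := by
        refine mul_le_mul_of_nonneg_left (hbeta.trans ?_) (by positivity)
        exact div_le_div_of_nonneg_left hΓ.le (by positivity) (mul_le_mul_of_nonneg_left
          (rpow_le_rpow h1r.le (by nlinarith) (by linarith)) hμα.le)
    _ = μ * (μ + 1) / (μ - α) ^ (α + 1) * (Gamma (α + 1) * (r ^ μ / (1 - r) ^ (α + 1))) := by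
        field_simp
    _ ≤ 2 ^ (α + 2) * μ ^ (1 - α) * (Gamma (α + 1) * (r ^ μ / (1 - r) ^ (α + 1))) := by
        gcongr
        exact mul_add_one_div_rpow_le hα₀.le hα₁ hμ
    _ = 2 ^ (α + 2) * Gamma (α + 1) * (μ ^ (1 - α) * r ^ μ * (1 - r) ^ (1 - α)) / (1 - r) ^ 2 := by
        rw [← hsq]
        field_simp
    _ ≤ 2 ^ (α + 2) * Gamma (α + 1) * 3 / (1 - r) ^ 2 := by
        gcongr
        exact rpow_mul_rpow_mul_one_sub_rpow_le_three (by linarith) hr₀ hr₁.le (by linarith)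
          (by linarith)
    _ = 3 * 2 ^ (α + 2) * Gamma (α + 1) / (1 - r) ^ 2 := by ring

lemma mul_rpow_mul_kernelIntegral_sub_one_le (hα₀ : -1 / 2 ≤ α) (hα₁ : α ≤ 1) (hμ : 5 ≤ μ)
    (hr₀ : 0 ≤ r) (hr₁ : r < 1) :
    μ * (μ + 1) * r ^ (μ + α + 1 / 2) * kernelIntegral α (μ - 1) (μ + 2) 1 (r ^ 2) ≤
      4 * (2 + 3 * 2 ^ (α + 2) * Gamma (α + 1)) / (1 - r) ^ 2 := by
  have hr₂ : r ^ 2 < 1 := by nlinarith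
  have hsplit := kernelIntegral_le_four_mul_add (c := α) (d := μ - 1) (e := μ + 2) (by linarith)
    hα₁ (by linarith) (by linarith) (sq_nonneg r) hr₂
  rw [show μ - 1 + (1 - α) = μ - α by ring] at hsplit
  have hK₁ := mul_kernelIntegral_one_le hμ hr₀ hr₁
  have hK₂ := mul_rpow_mul_kernelIntegral_le (μ := μ) (by linarith) hα₁ (by linarith) hr₀ hr₁
  have hν₁ : r ^ (μ + α + 1 / 2) ≤ 1 := rpow_le_one hr₀ hr₁.le (by linarith)
  have hνμ : r ^ (μ + α + 1 / 2) ≤ r ^ μ :=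
    rpow_le_rpow_of_exponent_ge' hr₀ hr₁.le (by linarith) (by linarith)
  have hμ₀ : 0 ≤ μ * (μ + 1) := by nlinarith
  have := kernelIntegral_nonneg (c := 1) (d := μ - 1) (e := μ + 2) (sq_nonneg r) hr₂
  have := kernelIntegral_nonneg (c := α) (d := μ - α) (e := μ + 2) (sq_nonneg r) hr₂
  have := rpow_nonneg hr₀ (μ + α + 1 / 2)
  calc μ * (μ + 1) * r ^ (μ + α + 1 / 2) * kernelIntegral α (μ - 1) (μ + 2) 1 (r ^ 2)
      ≤ μ * (μ + 1) * r ^ (μ + α + 1 / 2) * (4 * (kernelIntegral 1 (μ - 1) (μ + 2) 1 (r ^ 2) +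
          kernelIntegral α (μ - α) (μ + 2) 1 (r ^ 2))) := by gcongr
    _ = 4 * (r ^ (μ + α + 1 / 2) * (μ * (μ + 1) * kernelIntegral 1 (μ - 1) (μ + 2) 1 (r ^ 2)) +
          μ * (μ + 1) * r ^ (μ + α + 1 / 2) * kernelIntegral α (μ - α) (μ + 2) 1 (r ^ 2)) := by
        ring
    _ ≤ 4 * (1 * (μ * (μ + 1) * kernelIntegral 1 (μ - 1) (μ + 2) 1 (r ^ 2)) +
          μ * (μ + 1) * r ^ μ * kernelIntegral α (μ - α) (μ + 2) 1 (r ^ 2)) := by gcongr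
    _ ≤ 4 * (1 * (2 / (1 - r) ^ 2) + 3 * 2 ^ (α + 2) * Gamma (α + 1) / (1 - r) ^ 2) := by
        gcongr
    _ = 4 * (2 + 3 * 2 ^ (α + 2) * Gamma (α + 1)) / (1 - r) ^ 2 := by ring

lemma mul_rpow_mul_rpow_mul_kernelIntegral_le {p ν x y : ℝ} (hα₀ : -1 / 2 ≤ α) (hα₁ : α ≤ 1)
    (hμ : 5 ≤ μ) (hp : p = μ - α + 1 / 2) (hν : ν = μ + α + 1 / 2) (hy : 0 < y) (hyx : y < x) :
    μ * (μ + 1) * (y ^ ν * x ^ (p + 1) * kernelIntegral α (μ - 1) (μ + 2) (x ^ 2) (y ^ 2)) ≤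
      4 * (2 + 3 * 2 ^ (α + 2) * Gamma (α + 1)) / (x - y) ^ 2 := by
  subst hp hν
  have hx : 0 < x := hy.trans hyx
  set r := y / x with hr
  have hr₀ : 0 ≤ r := div_nonneg hy.le hx.le
  have hr₁ : r < 1 := (div_lt_one hx).mpr hyx
  have hyr : y = r * x := by rw [hr]; field_simp
  have hxpow : x ^ (μ + α + 1 / 2) * x ^ (μ - α + 1 / 2 + 1) * ((x ^ 2) ^ (μ + 2))⁻¹ =
      (x ^ 2)⁻¹ := by
    rw [← rpow_natCast_mul hx.le, show ((2 : ℕ) : ℝ) * (μ + 2) =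
      (μ + α + 1 / 2 + (μ - α + 1 / 2 + 1)) + 2 by push_cast; ring,
      rpow_add hx _ 2, rpow_add hx (μ + α + 1 / 2), rpow_two]
    have := rpow_pos_of_pos hx (μ + α + 1 / 2)
    have := rpow_pos_of_pos hx (μ - α + 1 / 2 + 1)
    field_simp
  have hxy : (x - y) ^ 2 = x ^ 2 * (1 - r) ^ 2 := by rw [hyr]; ring
  rw [kernelIntegral_eq_inv_rpow_mul (by positivity) (by nlinarith), ← div_pow, ← hr, hxy]
  nth_rewrite 1 [hyr]
  rw [mul_rpow hr₀ hx.le]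
  calc μ * (μ + 1) * (r ^ (μ + α + 1 / 2) * x ^ (μ + α + 1 / 2) * x ^ (μ - α + 1 / 2 + 1) *
        (((x ^ 2) ^ (μ + 2))⁻¹ * kernelIntegral α (μ - 1) (μ + 2) 1 (r ^ 2)))
      = μ * (μ + 1) * r ^ (μ + α + 1 / 2) * kernelIntegral α (μ - 1) (μ + 2) 1 (r ^ 2) *
        (x ^ (μ + α + 1 / 2) * x ^ (μ - α + 1 / 2 + 1) * ((x ^ 2) ^ (μ + 2))⁻¹) := by ring
    _ = μ * (μ + 1) * r ^ (μ + α + 1 / 2) * kernelIntegral α (μ - 1) (μ + 2) 1 (r ^ 2) /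
        x ^ 2 := by rw [hxpow, ← div_eq_mul_inv]
    _ ≤ 4 * (2 + 3 * 2 ^ (α + 2) * Gamma (α + 1)) / (1 - r) ^ 2 / x ^ 2 := by
        gcongr
        exact mul_rpow_mul_kernelIntegral_sub_one_le hα₀ hα₁ hμ hr₀ hr₁
    _ = 4 * (2 + 3 * 2 ^ (α + 2) * Gamma (α + 1)) / (x ^ 2 * (1 - r) ^ 2) := by
        rw [div_div, mul_comm ((1 - r) ^ 2)]

end Estimates

lemma abs_deriv_terms_le {μ p ν G x y I J : ℝ} (hμ : 0 < μ) (hp₀ : 0 < p) (hp : p ≤ μ + 1)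
    (hx : 0 < x) (hy : 0 < y) (hI₀ : 0 ≤ I) (hJ₀ : 0 ≤ J) (hIJ : I ≤ x ^ 2 * J) :
    |μ / G * (p * x ^ (p - 1)) * y ^ ν * I + μ / G * x ^ p * y ^ ν * (-(2 * x * (μ + 1)) * J)|
      ≤ 3 * |G|⁻¹ * (μ * (μ + 1) * (y ^ ν * x ^ (p + 1) * J)) := by
  have hxI : x ^ (p - 1) * I ≤ x ^ (p + 1) * J := by
    rw [show p + 1 = p - 1 + 2 by ring, rpow_add hx, rpow_two, mul_assoc]
    exact mul_le_mul_of_nonneg_left hIJ (rpow_nonneg hx.le _)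
  have hx₁ := rpow_pos_of_pos hx (p - 1)
  have hx₂ := rpow_pos_of_pos hx p
  have hyν := rpow_pos_of_pos hy ν
  calc |μ / G * (p * x ^ (p - 1)) * y ^ ν * I + μ / G * x ^ p * y ^ ν * (-(2 * x * (μ + 1)) * J)|
      ≤ μ * |G|⁻¹ * y ^ ν * (p * (x ^ (p - 1) * I) + 2 * (μ + 1) * (x ^ (p + 1) * J)) := by
        refine (abs_add_le _ _).trans_eq ?_
        simp only [abs_mul, abs_neg, abs_inv, abs_two, abs_of_pos hμ,
          abs_of_pos (by linarith : 0 < μ + 1), abs_of_pos hp₀, abs_of_pos hx, abs_of_pos hx₁,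
          abs_of_pos hx₂, abs_of_pos hyν, abs_of_nonneg hI₀, abs_of_nonneg hJ₀, div_eq_mul_inv]
        rw [rpow_add_one hx.ne']
        ring
    _ ≤ μ * |G|⁻¹ * y ^ ν * (p * (x ^ (p + 1) * J) + 2 * (μ + 1) * (x ^ (p + 1) * J)) := by
        gcongr
    _ ≤ μ * |G|⁻¹ * y ^ ν * ((μ + 1) * (x ^ (p + 1) * J) + 2 * (μ + 1) * (x ^ (p + 1) * J)) := by
        gcongr
    _ = 3 * |G|⁻¹ * (μ * (μ + 1) * (y ^ ν * x ^ (p + 1) * J)) := by ring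

lemma abs_deriv_kernel_le {α μ p ν G x y : ℝ} (hα₀ : -1 / 2 ≤ α) (hα₁ : α ≤ 1) (hμ : 5 ≤ μ)
    (hp : p = μ - α + 1 / 2) (hν : ν = μ + α + 1 / 2) (hy : 0 < y) (hyx : y < x) :
    |deriv (fun t => μ / G * t ^ p * y ^ ν * kernelIntegral α (μ - 1) (μ + 1) (t ^ 2) (y ^ 2)) x|
      ≤ 3 * |G|⁻¹ * (4 * (2 + 3 * 2 ^ (α + 2) * Gamma (α + 1))) / (x - y) ^ 2 := by
  have hx : 0 < x := hy.trans hyx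
  have hxy : y ^ 2 < x ^ 2 := by nlinarith
  have hI := hasDerivAt_kernelIntegral (c := α) (d := μ - 1) (e := μ + 1) (by linarith)
    (by linarith) (by linarith) hy.le hyx
  have hpow : HasDerivAt (fun t => μ / G * t ^ p * y ^ ν) (μ / G * (p * x ^ (p - 1)) * y ^ ν) x :=
    ((hasDerivAt_rpow_const (Or.inl hx.ne')).const_mul _).mul_const _
  have hIJ := kernelIntegral_le_mul_kernelIntegral_add_one (c := α) (d := μ - 1) (e := μ + 1)
    (by linarith) (by linarith) (by linarith) (sq_nonneg y) hxy
  rw [show μ + 1 + 1 = μ + 2 by ring] at hI hIJ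
  rw [(hpow.fun_mul hI).deriv, mul_div_assoc]
  refine (abs_deriv_terms_le (by linarith) (by linarith) (by linarith) hx hy
    (kernelIntegral_nonneg (sq_nonneg y) hxy) (kernelIntegral_nonneg (sq_nonneg y) hxy)
    hIJ).trans ?_
  gcongr
  exact mul_rpow_mul_rpow_mul_kernelIntegral_le hα₀ hα₁ hμ hp hν hy hyx

theorem transplantKernel_deriv_bound_below_general (a b : ℝ) (ha : -1 / 2 ≤ a) (hb : -1 / 2 ≤ b)
    (hab' : |a - b| ≤ 1) :
    ∃ C₂ : ℝ, ∀ (k : ℕ), 10 ≤ k → ∀ x y : ℝ, 0 < y → y < x →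
      |deriv (fun t => transplantKernel a b k t y) x| ≤ C₂ / (x - y) ^ 2 := by
  obtain ⟨hab₁, hab₂⟩ := abs_le.mp hab'
  refine ⟨3 * |Gamma ((b - a) / 2) * Gamma ((a - b + 2) / 2)|⁻¹ *
    (4 * (2 + 3 * 2 ^ ((a - b) / 2 + 2) * Gamma ((a - b) / 2 + 1))), fun k hk x y hy hyx => ?_⟩
  have hk' : (10 : ℝ) ≤ k := by exact_mod_cast hk
  exact abs_deriv_kernel_le (α := (a - b) / 2) (μ := (a + b) / 2 + k) (by linarith)
    (by linarith) (by linarith) (by ring) (by ring) hy hyx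

/-- Uniform smoothness estimate for the transplantation kernel in the region `0 < y < x`:
`|∂K_{a+k}^{b+k}(x,y)/∂x| ≤ C₂ / (x - y)²` with `C₂` independent of `k ≥ 10`. -/
theorem transplantKernel_deriv_bound_below (a b : ℝ) (ha : -1 / 2 ≤ a) (hb : -1 / 2 ≤ b)
    (hab : 0 < |a - b|) (hab' : |a - b| ≤ 1) :
    ∃ C₂ : ℝ, ∀ (k : ℕ), 10 ≤ k → ∀ x y : ℝ, 0 < y → y < x →
      |deriv (fun t => transplantKernel a b k t y) x| ≤ C₂ / (x - y) ^ 2 :=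
  transplantKernel_deriv_bound_below_general a b ha hb hab'
end

section
/- Let d > 0, λ > 0, and 0 < B < A. Then ∫_0^1 (1-s)^{d-1} / (A - B s)^{d+λ} ds ≤ (Γ(d) Γ(λ) / Γ(d+λ)) · 1 / (B^d (A - B)^λ), where Γ denotes the Gamma function. -/
open MeasureTheory Real

lemma cplx_eq_real_on (d lam x : ℝ) (hx : x ∈ Set.Ioo (0:ℝ) 1) :
    ((x:ℂ) ^ ((d:ℂ)-1) * ((1:ℂ)-x) ^ ((lam:ℂ)-1)) =
      ((x ^ (d-1) * (1-x) ^ (lam-1) : ℝ) : ℂ) := by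
  rw [Complex.ofReal_mul, Complex.ofReal_cpow hx.1.le,
    Complex.ofReal_cpow (by linarith [hx.2] : (0:ℝ) ≤ 1 - x)]
  push_cast
  ring_nf

lemma real_beta (d lam : ℝ) (hd : 0 < d) (hlam : 0 < lam) :
    IntegrableOn (fun x => x ^ (d-1) * (1-x) ^ (lam-1)) (Set.Ioo (0:ℝ) 1) ∧
    ∫ x in Set.Ioo (0:ℝ) 1, x ^ (d-1) * (1-x) ^ (lam-1)
      = Real.Gamma d * Real.Gamma lam / Real.Gamma (d+lam) := by
  set F : ℝ → ℂ := fun x => (x:ℂ) ^ ((d:ℂ)-1) * ((1:ℂ)-x) ^ ((lam:ℂ)-1) with hF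
  have hc : IntervalIntegrable F volume 0 1 :=
    Complex.betaIntegral_convergent (by simpa using hd) (by simpa using hlam)
  have hFi : IntegrableOn F (Set.Ioo (0:ℝ) 1) :=
    ((intervalIntegrable_iff_integrableOn_Ioc_of_le zero_le_one).mp hc).mono_set
      Set.Ioo_subset_Ioc_self
  have hae : ∀ᵐ x ∂(volume.restrict (Set.Ioo (0:ℝ) 1)),
      x ^ (d-1) * (1-x) ^ (lam-1) = (F x).re := by
    filter_upwards [ae_restrict_mem measurableSet_Ioo] with x hx
    rw [hF]
    simp only
    rw [cplx_eq_real_on d lam x hx, Complex.ofReal_re]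
  have hInt : IntegrableOn (fun x => x ^ (d-1) * (1-x) ^ (lam-1)) (Set.Ioo (0:ℝ) 1) :=
    hFi.re.congr (hae.mono fun x hx => hx.symm)
  refine ⟨hInt, ?_⟩
  have hval : ∫ x in Set.Ioo (0:ℝ) 1, x ^ (d-1) * (1-x) ^ (lam-1)
      = (∫ x in Set.Ioo (0:ℝ) 1, F x).re := by
    have h := integral_re hFi
    simp only [RCLike.re_to_complex] at h
    rw [← h]
    exact integral_congr_ae hae
  have h2 : ∫ x in Set.Ioo (0:ℝ) 1, F x = Complex.betaIntegral d lam := by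
    rw [Complex.betaIntegral, intervalIntegral.integral_of_le zero_le_one,
      ← integral_Ioc_eq_integral_Ioo]
  have hGamma := Complex.Gamma_mul_Gamma_eq_betaIntegral (s := (d:ℂ)) (t := (lam:ℂ))
    (by simpa using hd) (by simpa using hlam)
  have hne : (Real.Gamma (d+lam) : ℂ) ≠ 0 := by
    exact_mod_cast (Real.Gamma_pos_of_pos (by linarith)).ne'
  have hbeta : Complex.betaIntegral d lam
      = ((Real.Gamma d * Real.Gamma lam / Real.Gamma (d+lam) : ℝ) : ℂ) := by
    rw [eq_comm, Complex.ofReal_div, Complex.ofReal_mul, div_eq_iff hne]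
    rw [show ((d:ℂ) + lam) = ((d + lam : ℝ) : ℂ) by push_cast; ring,
      Complex.Gamma_ofReal, Complex.Gamma_ofReal, Complex.Gamma_ofReal] at hGamma
    linear_combination hGamma
  rw [hval, h2, hbeta, Complex.ofReal_re]


/-- Beta function bound: for `d, λ > 0` and `0 < B < A`,
`∫_0^1 (1-s)^{d-1}/(A-Bs)^{d+λ} ds ≤ (Γ(d)Γ(λ)/Γ(d+λ)) B^{-d} (A-B)^{-λ}`. -/
theorem integral_le_beta (d lam A B : ℝ) (hd : 0 < d) (hlam : 0 < lam)
    (hB : 0 < B) (hBA : B < A) :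
    (∫ s in Set.Ioo (0 : ℝ) 1, (1 - s) ^ (d - 1) / (A - B * s) ^ (d + lam)) ≤
      Real.Gamma d * Real.Gamma lam / Real.Gamma (d + lam) *
        (1 / (B ^ d * (A - B) ^ lam)) := by
  have hA : 0 < A := lt_trans hB hBA
  set p := A - B with hp
  have hp0 : 0 < p := by simp only [hp]; linarith
  set f : ℝ → ℝ := fun s => B * (1 - s) / (A - B * s) with hf
  set f' : ℝ → ℝ := fun s => -(B * p) / (A - B * s) ^ 2 with hf'
  have hy : ∀ s ∈ Set.Ioo (0:ℝ) 1, 0 < A - B * s := by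
    intro s hs; nlinarith [hs.1, hs.2]
  have hderiv : ∀ s ∈ Set.Ioo (0:ℝ) 1, HasDerivWithinAt f (f' s) (Set.Ioo 0 1) s := by
    intro s hs
    have hne : A - B * s ≠ 0 := (hy s hs).ne'
    have h1 : HasDerivAt (fun x : ℝ => B * (1 - x)) (-B) s := by
      simpa using ((hasDerivAt_id s).const_sub 1).const_mul B
    have h2 : HasDerivAt (fun x : ℝ => A - B * x) (-B) s := by
      simpa using ((hasDerivAt_id s).const_mul B).const_sub A
    have := h1.div h2 hne
    have heq : (-B * (A - B * s) - B * (1 - s) * -B) / (A - B * s) ^ 2 = f' s := by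
      rw [hf']; simp only [hp]; field_simp; ring
    rw [heq] at this
    exact this.hasDerivWithinAt
  have hinj : Set.InjOn f (Set.Ioo 0 1) := by
    intro s1 h1 s2 h2 he
    have hy1 := hy s1 h1; have hy2 := hy s2 h2
    simp only [hf] at he
    have hcross := (div_eq_div_iff hy1.ne' hy2.ne').mp he
    have hzero : B * (A - B) * (s2 - s1) = 0 := by linear_combination hcross
    have hBp : B * (A - B) ≠ 0 := by positivity
    have := (mul_eq_zero.mp hzero).resolve_left hBp
    linarith
  have himg : f '' Set.Ioo 0 1 = Set.Ioo 0 (B / A) := by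
    ext u
    constructor
    · rintro ⟨s, hs, rfl⟩
      have hys := hy s hs
      refine ⟨div_pos (by nlinarith [hs.2]) hys, ?_⟩
      rw [div_lt_div_iff₀ hys hA]
      nlinarith [mul_pos (mul_pos hB hs.1) hp0, hp]
    · intro hu
      have hu1 : u < 1 := lt_trans hu.2 (by rw [div_lt_one hA]; exact hBA)
      refine ⟨(B - A * u) / (B * (1 - u)), ⟨?_, ?_⟩, ?_⟩
      · apply div_pos
        · have : u * A < B := by
            have := hu.2
            rw [lt_div_iff₀ hA] at this
            linarith
          linarith
        · nlinarith
      · rw [div_lt_one (by nlinarith)]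
        nlinarith [hu.1]
      · simp only [hf]
        have hden1 : B * (1 - u) ≠ 0 := by nlinarith
        have h1u : (1:ℝ) - u ≠ 0 := by nlinarith
        have hnum : 1 - (B - A * u) / (B * (1 - u)) = u * (A - B) / (B * (1 - u)) := by
          field_simp; ring
        have hden : A - B * ((B - A * u) / (B * (1 - u))) = (A - B) / (1 - u) := by
          field_simp; ring
        rw [hnum, hden]
        have hAB : A - B ≠ 0 := by linarith
        field_simp
  have key := integral_image_eq_integral_abs_deriv_smul measurableSet_Ioo hderiv hinj
    (fun u => u ^ (d - 1) * (1 - u) ^ (lam - 1))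
  rw [himg] at key
  have hptwise : Set.EqOn (fun s => |f' s| • (f s ^ (d - 1) * (1 - f s) ^ (lam - 1)))
      (fun s => (B ^ d * p ^ lam) * ((1 - s) ^ (d - 1) / (A - B * s) ^ (d + lam)))
      (Set.Ioo 0 1) := by
    intro s hs
    have hys := hy s hs
    have h1s : 0 < 1 - s := by nlinarith [hs.2]
    simp only [hf, hf', smul_eq_mul]
    have hfs1 : 1 - B * (1 - s) / (A - B * s) = p / (A - B * s) := by
      rw [hp]; field_simp; ring
    rw [hfs1, abs_div, abs_neg, abs_of_pos (by positivity : (0:ℝ) < B * p),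
      abs_of_pos (by positivity : (0:ℝ) < (A - B * s) ^ 2),
      Real.div_rpow (by positivity) hys.le, Real.div_rpow hp0.le hys.le,
      Real.mul_rpow hB.le h1s.le]
    have hBd : B ^ d = B ^ (d - 1) * B := by
      rw [show d = d - 1 + 1 by ring, Real.rpow_add_one hB.ne']
      ring_nf
    have hplam : p ^ lam = p ^ (lam - 1) * p := by
      rw [show lam = lam - 1 + 1 by ring, Real.rpow_add_one hp0.ne']
      ring_nf
    have hysum : (A - B * s) ^ (d + lam)
        = (A - B * s) ^ (d - 1) * (A - B * s) ^ (lam - 1) * (A - B * s) ^ (2:ℕ) := by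
      rw [← Real.rpow_natCast (A - B * s) 2, ← Real.rpow_add hys, ← Real.rpow_add hys]
      congr 1
      push_cast
      ring
    rw [hBd, hplam, hysum]
    have e1 : (A - B * s) ^ (d - 1) ≠ 0 := (Real.rpow_pos_of_pos hys _).ne'
    have e2 : (A - B * s) ^ (lam - 1) ≠ 0 := (Real.rpow_pos_of_pos hys _).ne'
    have e3 : (A - B * s) ≠ 0 := hys.ne'
    field_simp
  have hre : (∫ s in Set.Ioo (0:ℝ) 1, |f' s| • (f s ^ (d - 1) * (1 - f s) ^ (lam - 1)))
      = (B ^ d * p ^ lam)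
        * ∫ s in Set.Ioo (0:ℝ) 1, (1 - s) ^ (d - 1) / (A - B * s) ^ (d + lam) := by
    rw [setIntegral_congr_fun measurableSet_Ioo hptwise, integral_const_mul]
  obtain ⟨hbint, hbval⟩ := real_beta d lam hd hlam
  have hmono : (∫ u in Set.Ioo (0:ℝ) (B / A), u ^ (d - 1) * (1 - u) ^ (lam - 1))
      ≤ ∫ u in Set.Ioo (0:ℝ) 1, u ^ (d - 1) * (1 - u) ^ (lam - 1) := by
    apply setIntegral_mono_set hbint
    · filter_upwards [ae_restrict_mem measurableSet_Ioo] with x hx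
      have h1 : 0 < x := hx.1
      have h2 : 0 < 1 - x := by nlinarith [hx.2]
      positivity
    · exact HasSubset.Subset.eventuallyLE
        (Set.Ioo_subset_Ioo_right (by rw [div_le_one hA]; linarith))
  have hK : 0 < B ^ d * p ^ lam := by positivity
  have hfinal : B ^ d * p ^ lam
      * (∫ s in Set.Ioo (0:ℝ) 1, (1 - s) ^ (d - 1) / (A - B * s) ^ (d + lam))
      ≤ Real.Gamma d * Real.Gamma lam / Real.Gamma (d + lam) := by
    rw [← hre, ← key, ← hbval]
    exact hmono
  rw [mul_one_div, le_div_iff₀ hK]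
  linarith [hfinal]
end

section
/- Let -1 < γ < 0, d ≥ 1, λ > 0, and 0 < B < A. Then there exists a constant C_{γ,λ}, depending only on γ and λ, such that ∫_0^{1/2} s^γ (1-s)^{d-1} / (A - B s)^{d+λ} ds ≤ (C_{γ,λ} / d^λ) · 1 / (B^d (A - B)^λ). -/
/-!
Write `A - B s = (A - B) + B (1 - s)`. Weighted AM-GM gives
`(A - B s)^(d+λ) ≥ (d/λ)^λ (A - B)^λ B^d (1 - s)^d`, and `(1 - s)⁻¹ ≤ 2` on `(0, 1/2)`, so the
integrand is at most `2 (λ/d)^λ B^(-d) (A - B)^(-λ) s^γ`; finally `∫₀^{1/2} s^γ ds` is finite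
because `γ > -1`.
-/

open MeasureTheory Real

lemma rpow_mul_rpow_le_div_rpow_mul_add_rpow {a b x y : ℝ} (ha : 0 < a) (hb : 0 < b)
    (hx : 0 ≤ x) (hy : 0 ≤ y) : x ^ a * y ^ b ≤ (a / b) ^ a * (x + y) ^ (a + b) := by
  have hab : 0 < a + b := by linarith
  set w₁ := a / (a + b)
  set w₂ := b / (a + b)
  have hw₁ : 0 < w₁ := by positivity
  have hw₂ : 0 < w₂ := by positivity
  have amgm : (x / w₁) ^ w₁ * (y / w₂) ^ w₂ ≤ x + y := by
    have := geom_mean_le_arith_mean2_weighted hw₁.le hw₂.le (div_nonneg hx hw₁.le)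
      (div_nonneg hy hw₂.le) (by rw [← add_div, div_self hab.ne'])
    rwa [mul_div_cancel₀ _ hw₁.ne', mul_div_cancel₀ _ hw₂.ne'] at this
  have amgm_pow : (x / w₁) ^ a * (y / w₂) ^ b ≤ (x + y) ^ (a + b) := by
    have := rpow_le_rpow (by positivity) amgm hab.le
    rwa [mul_rpow (by positivity) (by positivity), ← rpow_mul (by positivity),
      ← rpow_mul (by positivity), div_mul_cancel₀ _ hab.ne', div_mul_cancel₀ _ hab.ne'] at this
  have hw₁_le : w₁ ≤ a / b := div_le_div_of_nonneg_left ha.le hb (by linarith)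
  have hw₂_le : w₂ ≤ 1 := (div_le_one hab).2 (by linarith)
  calc x ^ a * y ^ b = w₁ ^ a * w₂ ^ b * ((x / w₁) ^ a * (y / w₂) ^ b) := by
        rw [div_rpow hx hw₁.le, div_rpow hy hw₂.le]
        field_simp
    _ ≤ (a / b) ^ a * 1 * (x + y) ^ (a + b) := by
        gcongr
        exact rpow_le_one hw₂.le hw₂_le hb.le
    _ = (a / b) ^ a * (x + y) ^ (a + b) := by rw [mul_one]

lemma one_sub_rpow_div_rpow_le {d lam A B s : ℝ} (hd : 0 < d) (hlam : 0 < lam) (hB : 0 < B)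
    (hBA : B < A) (hs : s ≤ 1) :
    (1 - s) ^ d / (A - B * s) ^ (d + lam) ≤ (lam / d) ^ lam / (B ^ d * (A - B) ^ lam) := by
  have hAB : 0 < A - B := by linarith
  have key := rpow_mul_rpow_le_div_rpow_mul_add_rpow hlam hd hAB.le
    (mul_nonneg hB.le (sub_nonneg.2 hs))
  rw [show A - B + B * (1 - s) = A - B * s by ring, add_comm lam,
    mul_rpow hB.le (sub_nonneg.2 hs)] at key
  have hABs : 0 < A - B * s := by nlinarith
  rw [div_le_div_iff₀ (by positivity) (by positivity)]
  calc (1 - s) ^ d * (B ^ d * (A - B) ^ lam) = (A - B) ^ lam * (B ^ d * (1 - s) ^ d) := by ring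
    _ ≤ _ := key

lemma one_sub_rpow_sub_one_div_rpow_le {d lam A B s : ℝ} (hd : 0 < d) (hlam : 0 < lam)
    (hB : 0 < B) (hBA : B < A) (hs : s ≤ 1 / 2) :
    (1 - s) ^ (d - 1) / (A - B * s) ^ (d + lam) ≤
      2 * (lam / d) ^ lam / (B ^ d * (A - B) ^ lam) := by
  have h1s : 0 < 1 - s := by linarith
  have hAB : 0 < A - B := by linarith
  have hinv : (1 - s)⁻¹ ≤ 2 := by
    rw [inv_le_comm₀ h1s two_pos]
    linarith
  calc (1 - s) ^ (d - 1) / (A - B * s) ^ (d + lam)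
      = (1 - s)⁻¹ * ((1 - s) ^ d / (A - B * s) ^ (d + lam)) := by
        rw [rpow_sub_one h1s.ne']
        ring
    _ ≤ 2 * ((lam / d) ^ lam / (B ^ d * (A - B) ^ lam)) :=
        mul_le_mul_of_nonneg hinv (one_sub_rpow_div_rpow_le hd hlam hB hBA (by linarith))
          (inv_nonneg.2 h1s.le) (by positivity)
    _ = 2 * (lam / d) ^ lam / (B ^ d * (A - B) ^ lam) := by rw [mul_div_assoc]

lemma integral_Ioo_zero_rpow {γ c : ℝ} (hγ : -1 < γ) (hc : 0 ≤ c) :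
    ∫ s in Set.Ioo 0 c, s ^ γ = c ^ (γ + 1) / (γ + 1) := by
  rw [← integral_Ioc_eq_integral_Ioo, ← intervalIntegral.integral_of_le hc,
    integral_rpow (Or.inl hγ), zero_rpow (by linarith), sub_zero]

theorem integral_near_origin_estimate_general (γ lam : ℝ) (hγ : -1 < γ)
    (hlam : 0 < lam) :
    ∃ C : ℝ, ∀ d A B : ℝ, 1 ≤ d → 0 < B → B < A →
      (∫ s in Set.Ioo (0 : ℝ) (1 / 2),
          s ^ γ * (1 - s) ^ (d - 1) / (A - B * s) ^ (d + lam)) ≤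
        C / d ^ lam * (1 / (B ^ d * (A - B) ^ lam)) := by
  refine ⟨2 * lam ^ lam * ((1 / 2) ^ (γ + 1) / (γ + 1)), fun d A B hd hB hBA => ?_⟩
  have hd₀ : 0 < d := by linarith
  set M := 2 * (lam / d) ^ lam / (B ^ d * (A - B) ^ lam) with hM
  have integrand_nonneg : ∀ s ∈ Set.Ioo (0 : ℝ) (1 / 2),
      0 ≤ s ^ γ * (1 - s) ^ (d - 1) / (A - B * s) ^ (d + lam) := fun s ⟨hs₀, hs⟩ => by
    have : 0 < 1 - s := by linarith
    have : 0 < A - B * s := by nlinarith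
    positivity
  have integrand_le : ∀ s ∈ Set.Ioo (0 : ℝ) (1 / 2),
      s ^ γ * (1 - s) ^ (d - 1) / (A - B * s) ^ (d + lam) ≤ M * s ^ γ := fun s hs => by
    rw [mul_div_assoc, mul_comm M]
    exact mul_le_mul_of_nonneg_left
      (one_sub_rpow_sub_one_div_rpow_le hd₀ hlam hB hBA hs.2.le) (rpow_nonneg hs.1.le γ)
  calc (∫ s in Set.Ioo (0 : ℝ) (1 / 2), s ^ γ * (1 - s) ^ (d - 1) / (A - B * s) ^ (d + lam))
      ≤ ∫ s in Set.Ioo (0 : ℝ) (1 / 2), M * s ^ γ :=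
        integral_mono_of_nonneg (ae_restrict_of_forall_mem measurableSet_Ioo integrand_nonneg)
          (((intervalIntegral.integrableOn_Ioo_rpow_iff one_half_pos).2 hγ).const_mul M)
          (ae_restrict_of_forall_mem measurableSet_Ioo integrand_le)
    _ = M * ((1 / 2) ^ (γ + 1) / (γ + 1)) := by
        rw [integral_const_mul, integral_Ioo_zero_rpow hγ one_half_pos.le]
    _ = _ := by
        rw [hM, div_rpow hlam.le hd₀.le]
        field_simp

/-- Estimate near the origin for `-1 < γ < 0`: for `d ≥ 1`, `λ > 0`, and `0 < B < A`,
`∫_0^{1/2} s^γ (1-s)^{d-1}/(A-Bs)^{d+λ} ds ≤ (C_{γ,λ}/d^λ) B^{-d} (A-B)^{-λ}`. -/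
theorem integral_near_origin_estimate (γ lam : ℝ) (hγ : -1 < γ) (hγ0 : γ < 0)
    (hlam : 0 < lam) :
    ∃ C : ℝ, ∀ d A B : ℝ, 1 ≤ d → 0 < B → B < A →
      (∫ s in Set.Ioo (0 : ℝ) (1 / 2),
          s ^ γ * (1 - s) ^ (d - 1) / (A - B * s) ^ (d + lam)) ≤
        C / d ^ lam * (1 / (B ^ d * (A - B) ^ lam)) :=
  integral_near_origin_estimate_general γ lam hγ hlam
end

section
/- Let a, b ≥ -1/2 with 0 < |a - b| ≤ 1. Then there exists a constant C, depending only on a and b, such that for every integer k ≥ 10 and all 0 < y < x, the quantity I₁ = ((a+b)/2 + k)(2a + 2k + 3) x^{b+k-1/2} y^{a+k+1/2} ∫_0^1 s^{(a-b)/2} (1-s)^{(a+b)/2+k-1} / (x² - y² s)^{(a+b)/2+k+1} ds satisfies I₁ ≤ C / (x - y)². -/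
/-!
Put `p = (a+b)/2 + k`, `α = (a-b)/2 ≥ -1/2` and `r = y/x`. By homogeneity,
`I₁ = p (2a+2k+3) r^(a+k+1/2) J / x²` with `J = ∫₀¹ s^α (1-s)^(p-1) / (1-r²s)^(p+1) ds`.
Without the factor `s^α` the integrand has the primitive `-((1-s)/(1-r²s))^p / (p(1-r²))`,
which settles the range `s ≥ 1/2`, where `s^α ≤ 2`. For `s ≤ 1/2` we have
`(1-s)/(1-r²s) ≤ exp(-(1-r²)s)` and `1-r²s ≥ 1/2`, and `exp(-v) ≤ 2 v^(-1/4)` trades the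
exponential decay for the integrable majorant `s^(-3/4)`. Hence
`J ≤ 32 ((p-1)(1-r²))^(-1/4) + 2/(p(1-r²))`. Finally `r^(a+k+1/2) ≤ exp(-k(1-r)/2)`, and since
`v^β exp(-v)` is bounded, the prefactor `p (2a+2k+3) ≈ k²` is absorbed into `(1-r)^(-2)`.
-/

open MeasureTheory Real Set

lemma rpow_le_one_add_pow {u β : ℝ} {n : ℕ} (hu : 0 ≤ u) (hβ : 0 ≤ β) (hβn : β ≤ n) :
    u ^ β ≤ 1 + u ^ n := by
  rcases le_total u 1 with hu1 | hu1
  · linarith [rpow_le_one hu hu1 hβ, pow_nonneg hu n]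
  · calc u ^ β ≤ u ^ (n : ℝ) := rpow_le_rpow_of_exponent_le hu1 hβn
      _ ≤ 1 + u ^ n := by rw [rpow_natCast]; linarith

lemma rpow_mul_exp_neg_le {u β : ℝ} {n : ℕ} (hu : 0 ≤ u) (hβ : 0 ≤ β) (hβn : β ≤ n) :
    u ^ β * exp (-u) ≤ 1 + n.factorial := by
  have hpow : u ^ n ≤ n.factorial * exp u := by
    rw [← div_le_iff₀' (by positivity)]
    exact pow_div_factorial_le_exp u hu n
  rw [← le_div_iff₀ (exp_pos _), exp_neg, div_inv_eq_mul]
  linarith [rpow_le_one_add_pow hu hβ hβn, one_le_exp hu]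

lemma exp_neg_le_two_mul_rpow_neg_quarter {v : ℝ} (hv : 0 < v) :
    exp (-v) ≤ 2 * v ^ (-(1 / 4) : ℝ) := by
  have h := rpow_mul_exp_neg_le (n := 1) hv.le (β := 1 / 4) (by norm_num) (by norm_num)
  rw [rpow_neg hv.le, ← div_eq_mul_inv, le_div_iff₀ (by positivity)]
  norm_num at h
  linarith

lemma rpow_le_exp_neg_mul_one_sub {r e κ : ℝ} (hr0 : 0 < r) (hr1 : r ≤ 1) (hκ : 0 ≤ κ)
    (hκe : κ ≤ e) : r ^ e ≤ exp (-(κ * (1 - r))) :=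
  calc r ^ e ≤ r ^ κ := rpow_le_rpow_of_exponent_ge hr0 hr1 hκe
    _ = exp (log r * κ) := rpow_def_of_pos hr0 κ
    _ ≤ exp (-(κ * (1 - r))) := by
      gcongr
      nlinarith [log_le_sub_one_of_pos hr0]

lemma one_sub_mul_pos {q s : ℝ} (hq : q < 1) (hs0 : 0 ≤ s) (hs1 : s ≤ 1) : 0 < 1 - q * s := by
  rcases le_total q 0 with hq0 | hq0 <;> nlinarith

/-- The integrand of `I₁` without the factor `s ^ α`, after scaling `x` to `1` (`q = (y/x)²`). -/
noncomputable def kernelIntegrand (p q s : ℝ) : ℝ := (1 - s) ^ (p - 1) / (1 - q * s) ^ (p + 1)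

section KernelIntegrand

variable {p q s : ℝ}

lemma continuousOn_kernelIntegrand (hp : 1 ≤ p) (hq : q < 1) :
    ContinuousOn (kernelIntegrand p q) (Icc 0 1) := by
  have hd : ∀ s ∈ Icc (0 : ℝ) 1, 0 < 1 - q * s := fun s hs => one_sub_mul_pos hq hs.1 hs.2
  refine ContinuousOn.div ?_ ?_ fun s hs => (rpow_pos_of_pos (hd s hs) _).ne'
  · exact (continuous_const.sub continuous_id).continuousOn.rpow_const
      fun _ _ => Or.inr (by linarith)
  · exact (continuous_const.sub (continuous_const.mul continuous_id)).continuousOn.rpow_const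
      fun s hs => Or.inl (hd s hs).ne'

lemma hasDerivAt_neg_rpow_div_kernelIntegrand (hp : 1 ≤ p) (hq : q < 1) (hs : s ∈ Icc 0 1) :
    HasDerivAt (fun s => -((1 - s) / (1 - q * s)) ^ p / (p * (1 - q)))
      (kernelIntegrand p q s) s := by
  have hd := one_sub_mul_pos hq hs.1 hs.2
  have hquot : HasDerivAt (fun s => (1 - s) / (1 - q * s)) ((q - 1) / (1 - q * s) ^ 2) s :=
    (((hasDerivAt_id s).const_sub 1).div (((hasDerivAt_id s).const_mul q).const_sub 1)
      hd.ne').congr_deriv (by simp only [id]; ring)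
  refine (((hquot.rpow_const (p := p) (Or.inr hp)).neg).div_const (p * (1 - q))).congr_deriv ?_
  rw [kernelIntegrand, div_rpow (by linarith [hs.2]) hd.le,
    show p + 1 = p - 1 + (2 : ℕ) by push_cast; ring, rpow_add_natCast hd.ne']
  have : p ≠ 0 := by linarith
  have : 1 - q ≠ 0 := by linarith
  field_simp
  ring

theorem integral_kernelIntegrand (hp : 1 ≤ p) (hq : q < 1) :
    ∫ s in Ioo (0 : ℝ) 1, kernelIntegrand p q s = 1 / (p * (1 - q)) := by
  rw [← integral_Ioc_eq_integral_Ioo, ← intervalIntegral.integral_of_le zero_le_one,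
    intervalIntegral.integral_eq_sub_of_hasDerivAt
      (fun s hs => hasDerivAt_neg_rpow_div_kernelIntegrand hp hq
        (uIcc_of_le (zero_le_one (α := ℝ)) ▸ hs))
      ((continuousOn_kernelIntegrand hp hq).intervalIntegrable_of_Icc zero_le_one)]
  simp [zero_rpow (by linarith : p ≠ 0), neg_div, mul_comm]

lemma one_sub_div_one_sub_mul_le_exp (hq0 : 0 ≤ q) (hq : q < 1) (hs0 : 0 ≤ s) (hs1 : s ≤ 1) :
    (1 - s) / (1 - q * s) ≤ exp (-((1 - q) * s)) := by
  rw [div_le_iff₀ (one_sub_mul_pos hq hs0 hs1)]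
  -- the difference of the two sides is `q (1 - q) s²`
  calc 1 - s ≤ (1 - (1 - q) * s) * (1 - q * s) := by nlinarith [mul_nonneg hq0 (sq_nonneg s)]
    _ ≤ exp (-((1 - q) * s)) * (1 - q * s) := by
      gcongr
      · linarith [one_sub_mul_pos hq hs0 hs1]
      · linarith [add_one_le_exp (-((1 - q) * s))]

lemma kernelIntegrand_le_of_le_half (hp : 1 ≤ p) (hq0 : 0 ≤ q) (hq : q < 1) (hs0 : 0 ≤ s)
    (hs : s ≤ 1 / 2) : kernelIntegrand p q s ≤ 4 * exp (-((p - 1) * (1 - q) * s)) := by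
  have hd := one_sub_mul_pos hq hs0 (by linarith)
  have hd2 : 1 / 2 ≤ 1 - q * s := by nlinarith
  calc kernelIntegrand p q s = ((1 - s) / (1 - q * s)) ^ (p - 1) * (1 / (1 - q * s) ^ 2) := by
        rw [kernelIntegrand, div_rpow (by linarith) hd.le,
          show p + 1 = p - 1 + (2 : ℕ) by push_cast; ring, rpow_add_natCast hd.ne']
        field_simp
    _ ≤ exp (-((1 - q) * s)) ^ (p - 1) * 4 := by
        gcongr
        · exact div_nonneg (by linarith) hd.le
        · exact one_sub_div_one_sub_mul_le_exp hq0 hq hs0 (by linarith)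
        · rw [div_le_iff₀ (by positivity)]; nlinarith
    _ = 4 * exp (-((p - 1) * (1 - q) * s)) := by rw [← exp_mul]; ring_nf

lemma kernelIntegrand_nonneg_s14 (hq : q < 1) (hs : s ∈ Ioo (0 : ℝ) 1) : 0 ≤ kernelIntegrand p q s :=
  div_nonneg (rpow_nonneg (by linarith [hs.2]) _)
    (rpow_nonneg (one_sub_mul_pos hq hs.1.le hs.2.le).le _)

lemma rpow_mul_kernelIntegrand_le {α : ℝ} (hα : -(1 / 2) ≤ α) (hp : 1 < p) (hq0 : 0 ≤ q)
    (hq : q < 1) (hs : s ∈ Ioo (0 : ℝ) 1) :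
    s ^ α * kernelIntegrand p q s ≤
      8 * ((p - 1) * (1 - q)) ^ (-(1 / 4) : ℝ) * s ^ (-(3 / 4) : ℝ) +
        2 * kernelIntegrand p q s := by
  have hK := kernelIntegrand_nonneg_s14 (p := p) hq hs
  obtain ⟨hs0, hs1⟩ := hs
  have hlam : 0 < (p - 1) * (1 - q) := by nlinarith
  rcases le_or_gt (1 / 2) s with hs2 | hs2
  · have hsα : s ^ α ≤ 2 :=
      calc s ^ α ≤ s ^ (-1 : ℝ) := rpow_le_rpow_of_exponent_ge hs0 hs1.le (by linarith)
        _ ≤ 2 := by rw [rpow_neg_one, inv_le_comm₀ hs0 two_pos]; linarith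
    have : 0 ≤ 8 * ((p - 1) * (1 - q)) ^ (-(1 / 4) : ℝ) * s ^ (-(3 / 4) : ℝ) := by positivity
    nlinarith
  · calc s ^ α * kernelIntegrand p q s
        ≤ s ^ (-(1 / 2) : ℝ) * (4 * (2 * ((p - 1) * (1 - q) * s) ^ (-(1 / 4) : ℝ))) := by
          refine mul_le_mul (rpow_le_rpow_of_exponent_ge hs0 hs1.le hα) ?_ hK (by positivity)
          exact (kernelIntegrand_le_of_le_half hp.le hq0 hq hs0.le hs2.le).trans
            (by gcongr; exact exp_neg_le_two_mul_rpow_neg_quarter (by positivity))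
      _ = 8 * ((p - 1) * (1 - q)) ^ (-(1 / 4) : ℝ) * s ^ (-(3 / 4) : ℝ) := by
          rw [mul_rpow hlam.le hs0.le, show (-(3 / 4) : ℝ) = -(1 / 2) + -(1 / 4) by norm_num,
            rpow_add hs0]
          ring
      _ ≤ _ := le_add_of_nonneg_right (by positivity)

theorem integral_rpow_mul_kernelIntegrand_le {α : ℝ} (hα : -(1 / 2) ≤ α) (hp : 1 < p)
    (hq0 : 0 ≤ q) (hq : q < 1) :
    ∫ s in Ioo (0 : ℝ) 1, s ^ α * kernelIntegrand p q s ≤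
      32 * ((p - 1) * (1 - q)) ^ (-(1 / 4) : ℝ) + 2 / (p * (1 - q)) := by
  have hpow : IntegrableOn (fun s : ℝ => s ^ (-(3 / 4) : ℝ)) (Ioo 0 1) :=
    (intervalIntegral.integrableOn_Ioo_rpow_iff one_pos).2 (by norm_num)
  have hK : IntegrableOn (kernelIntegrand p q) (Ioo 0 1) :=
    ((continuousOn_kernelIntegrand hp.le hq).integrableOn_Icc).mono_set Ioo_subset_Icc_self
  have hpow_int : ∫ s in Ioo (0 : ℝ) 1, s ^ (-(3 / 4) : ℝ) = 4 := by
    rw [← integral_Ioc_eq_integral_Ioo, ← intervalIntegral.integral_of_le zero_le_one,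
      integral_rpow (Or.inl (by norm_num))]
    norm_num
  calc _ ≤ ∫ s in Ioo (0 : ℝ) 1, (8 * ((p - 1) * (1 - q)) ^ (-(1 / 4) : ℝ) * s ^ (-(3 / 4) : ℝ) +
        2 * kernelIntegrand p q s) := by
        refine integral_mono_of_nonneg ?_ ((hpow.const_mul _).add (hK.const_mul 2)) ?_ <;>
          filter_upwards [ae_restrict_mem measurableSet_Ioo] with s hs
        · exact mul_nonneg (rpow_nonneg hs.1.le _) (kernelIntegrand_nonneg_s14 hq hs)
        · exact rpow_mul_kernelIntegrand_le hα hp hq0 hq hs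
    _ = _ := by
        rw [integral_add (hpow.const_mul _) (hK.const_mul 2), integral_const_mul,
          integral_const_mul, hpow_int, integral_kernelIntegrand hp.le hq]
        ring

end KernelIntegrand

lemma setIntegral_div_sub_mul_rpow (f : ℝ → ℝ) {A B c : ℝ} (hA : 0 < A) (hBA : B < A) :
    ∫ s in Ioo (0 : ℝ) 1, f s / (A - B * s) ^ c =
      A ^ (-c) * ∫ s in Ioo (0 : ℝ) 1, f s / (1 - B / A * s) ^ c := by
  rw [← integral_const_mul]
  refine setIntegral_congr_fun measurableSet_Ioo fun s hs => ?_
  have hd := one_sub_mul_pos ((div_lt_one hA).2 hBA) hs.1.le hs.2.le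
  rw [show A - B * s = A * (1 - B / A * s) by field_simp, mul_rpow hA.le hd.le, rpow_neg hA.le]
  field_simp

lemma rpow_mul_rpow_mul_sq_rpow_neg {x y β e p : ℝ} (hx : 0 < x) (hy : 0 ≤ y)
    (h : β + e = 2 * p) : x ^ β * y ^ e * (x ^ 2) ^ (-(p + 1)) = (y / x) ^ e / x ^ 2 := by
  have hx_pow : x ^ β * (x ^ 2) ^ (-(p + 1)) = (x ^ e * x ^ 2)⁻¹ := by
    rw [← rpow_natCast x 2, ← rpow_mul hx.le, ← rpow_add hx, ← rpow_add hx, ← rpow_neg hx.le]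
    congr 1
    push_cast
    linarith
  rw [div_rpow hy hx.le, mul_right_comm, hx_pow]
  field_simp

lemma rpow_mul_rpow_mul_setIntegral_eq (f : ℝ → ℝ) {x y β e p : ℝ} (hx : 0 < x) (hy : 0 ≤ y)
    (hyx : y < x) (h : β + e = 2 * p) :
    x ^ β * y ^ e * ∫ s in Ioo (0 : ℝ) 1, f s / (x ^ 2 - y ^ 2 * s) ^ (p + 1) =
      (y / x) ^ e / x ^ 2 * ∫ s in Ioo (0 : ℝ) 1, f s / (1 - (y / x) ^ 2 * s) ^ (p + 1) := by
  rw [setIntegral_div_sub_mul_rpow f (by positivity) (by nlinarith), ← div_pow, ← mul_assoc,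
    rpow_mul_rpow_mul_sq_rpow_neg hx hy h]

lemma mul_rpow_mul_integral_bound_le {r e κ p G M : ℝ} (hr0 : 0 < r) (hr1 : r < 1)
    (hκ : 0 < κ) (hκe : κ ≤ e) (hκp : κ ≤ p - 1) (hG : 0 ≤ G) (hpG : p * G ≤ M * κ ^ 2) :
    p * G * r ^ e * (32 * ((p - 1) * (1 - r ^ 2)) ^ (-(1 / 4) : ℝ) + 2 / (p * (1 - r ^ 2))) ≤
      100 * M / (1 - r) ^ 2 := by
  set v := κ * (1 - r) with hv_def
  have hv : 0 < v := mul_pos hκ (by linarith)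
  have hr2 : 1 - r ≤ 1 - r ^ 2 := by nlinarith
  have hvlam : v ≤ (p - 1) * (1 - r ^ 2) := by
    nlinarith [mul_le_mul hκp hr2 (by linarith) (by linarith : 0 ≤ p - 1)]
  have hvp : v ≤ p * (1 - r ^ 2) := by nlinarith
  have hbracket : 32 * ((p - 1) * (1 - r ^ 2)) ^ (-(1 / 4) : ℝ) + 2 / (p * (1 - r ^ 2)) ≤
      32 * v ^ (-(1 / 4) : ℝ) + 2 / v :=
    add_le_add (mul_le_mul_of_nonneg_left (rpow_le_rpow_of_nonpos hv hvlam (by norm_num))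
      (by norm_num)) (div_le_div_of_nonneg_left zero_le_two hv hvp)
  have hMκ : 0 ≤ M * κ ^ 2 := (mul_nonneg (by linarith) hG).trans hpG
  have hvv : v ^ 2 * v ^ (-(1 / 4) : ℝ) = v ^ (7 / 4 : ℝ) := by
    rw [← rpow_natCast, ← rpow_add hv]; norm_num
  calc p * G * r ^ e * (32 * ((p - 1) * (1 - r ^ 2)) ^ (-(1 / 4) : ℝ) + 2 / (p * (1 - r ^ 2)))
      ≤ M * κ ^ 2 * exp (-v) * (32 * v ^ (-(1 / 4) : ℝ) + 2 / v) :=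
        mul_le_mul (mul_le_mul hpG (rpow_le_exp_neg_mul_one_sub hr0 hr1.le hκ.le hκe)
          (by positivity) hMκ) hbracket
          (add_nonneg (mul_nonneg (by norm_num) (rpow_nonneg (hv.le.trans hvlam) _))
            (div_nonneg zero_le_two (hv.le.trans hvp))) (mul_nonneg hMκ (exp_pos _).le)
    _ = M * (32 * (v ^ (7 / 4 : ℝ) * exp (-v)) + 2 * (v ^ (1 : ℝ) * exp (-v))) / (1 - r) ^ 2 := by
        rw [← hvv, rpow_one, (eq_div_iff (by linarith)).2 hv_def.symm]
        field_simp
    _ ≤ M * (32 * (1 + (2 : ℕ).factorial) + 2 * (1 + (1 : ℕ).factorial)) / (1 - r) ^ 2 := by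
        have hM : 0 ≤ M := nonneg_of_mul_nonneg_left hMκ (by positivity)
        have h₁ := rpow_mul_exp_neg_le (n := 2) hv.le (β := 7 / 4) (by norm_num) (by norm_num)
        have h₂ := rpow_mul_exp_neg_le (n := 1) hv.le (β := 1) (by norm_num) (by norm_num)
        gcongr
    _ = 100 * M / (1 - r) ^ 2 := by norm_num [Nat.factorial]; ring

lemma half_add_mul_two_mul_add_le {a b k : ℝ} (ha : -1 / 2 ≤ a) (hb : -1 / 2 ≤ b) (hk : 1 ≤ k) :
    ((a + b) / 2 + k) * (2 * a + 2 * k + 3) ≤ 8 * (|a| + |b| + 3) ^ 2 * (k / 2) ^ 2 := by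
  have hp : (a + b) / 2 + k ≤ (|a| + |b| + 3) * k := by
    nlinarith [le_abs_self a, le_abs_self b, abs_nonneg a, abs_nonneg b]
  have hG : 2 * a + 2 * k + 3 ≤ 2 * (|a| + |b| + 3) * k := by
    nlinarith [le_abs_self a, abs_nonneg a, abs_nonneg b]
  nlinarith [mul_le_mul hp hG (by linarith) (by positivity)]

theorem I1_bound_general (a b : ℝ) (ha : -1 / 2 ≤ a) (hb : -1 / 2 ≤ b)
    (hab' : |a - b| ≤ 1) :
    ∃ C : ℝ, ∀ (k : ℕ), 10 ≤ k → ∀ x y : ℝ, 0 < y → y < x →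
      ((a + b) / 2 + k) * (2 * a + 2 * k + 3) * x ^ (b + k - 1 / 2) * y ^ (a + k + 1 / 2) *
          (∫ s in Set.Ioo (0 : ℝ) 1,
            s ^ ((a - b) / 2) * (1 - s) ^ ((a + b) / 2 + k - 1) /
              (x ^ 2 - y ^ 2 * s) ^ ((a + b) / 2 + k + 1)) ≤
        C / (x - y) ^ 2 := by
  refine ⟨100 * (8 * (|a| + |b| + 3) ^ 2), fun k hk x y hy hxy => ?_⟩
  have hk : (10 : ℝ) ≤ k := by exact_mod_cast hk
  have hx : 0 < x := hy.trans hxy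
  set p := (a + b) / 2 + (k : ℝ) with hp
  set G := 2 * a + 2 * (k : ℝ) + 3 with hG
  set e := a + (k : ℝ) + 1 / 2 with he
  set J := ∫ s in Ioo (0 : ℝ) 1,
    s ^ ((a - b) / 2) * (1 - s) ^ (p - 1) / (1 - (y / x) ^ 2 * s) ^ (p + 1) with hJ_def
  have hJ : J ≤ 32 * ((p - 1) * (1 - (y / x) ^ 2)) ^ (-(1 / 4) : ℝ) +
      2 / (p * (1 - (y / x) ^ 2)) := by
    rw [hJ_def]
    simpa only [kernelIntegrand, mul_div_assoc] using
      integral_rpow_mul_kernelIntegrand_le (by linarith [(abs_le.1 hab').1]) (by linarith)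
        (by positivity) (by rw [sq_lt_one_iff₀ (by positivity), div_lt_one hx]; exact hxy)
  calc _ = p * G * ((y / x) ^ e / x ^ 2 * J) := by
        rw [hJ_def, ← rpow_mul_rpow_mul_setIntegral_eq (β := b + k - 1 / 2) _ hx hy.le hxy
          (by ring)]
        ring
    _ ≤ p * G * ((y / x) ^ e / x ^ 2 * (32 * ((p - 1) * (1 - (y / x) ^ 2)) ^ (-(1 / 4) : ℝ) +
          2 / (p * (1 - (y / x) ^ 2)))) := by
        gcongr
        exact mul_nonneg (by linarith) (by linarith)
    _ ≤ 100 * (8 * (|a| + |b| + 3) ^ 2) / (1 - y / x) ^ 2 / x ^ 2 := by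
        rw [← mul_div_right_comm, ← mul_div_assoc, ← mul_assoc]
        gcongr
        exact mul_rpow_mul_integral_bound_le (div_pos hy hx) ((div_lt_one hx).2 hxy)
          (by positivity) (by linarith) (by linarith) (by linarith)
          (half_add_mul_two_mul_add_le ha hb (by linarith))
    _ = 100 * (8 * (|a| + |b| + 3) ^ 2) / (x - y) ^ 2 := by
        field_simp

/-- Uniform bound for the term `I₁` arising when differentiating in `x` the integral
representation of the Hankel transplantation kernel `K_{a+k}^{b+k}(x,y)` for `0 < y < x`:
`I₁ ≤ C / (x-y)²` with `C` independent of `k ≥ 10`. -/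
theorem I1_bound (a b : ℝ) (ha : -1 / 2 ≤ a) (hb : -1 / 2 ≤ b)
    (hab : 0 < |a - b|) (hab' : |a - b| ≤ 1) :
    ∃ C : ℝ, ∀ (k : ℕ), 10 ≤ k → ∀ x y : ℝ, 0 < y → y < x →
      ((a + b) / 2 + k) * (2 * a + 2 * k + 3) * x ^ (b + k - 1 / 2) * y ^ (a + k + 1 / 2) *
          (∫ s in Set.Ioo (0 : ℝ) 1,
            s ^ ((a - b) / 2) * (1 - s) ^ ((a + b) / 2 + k - 1) /
              (x ^ 2 - y ^ 2 * s) ^ ((a + b) / 2 + k + 1)) ≤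
        C / (x - y) ^ 2 :=
  I1_bound_general a b ha hb hab'
end

section
/- Let a, b ≥ -1/2 with 0 < |a - b| ≤ 1. Then there exists a constant C, depending only on a and b, such that for every integer k ≥ 10 and all 0 < y < x, the quantity I₂ = ((a+b)/2 + k)((a+b)/2 + k + 1) x^{b+k-1/2} y^{a+k+5/2} ∫_0^1 s^{(a-b+2)/2} (1-s)^{(a+b)/2+k-1} / (x² - y² s)^{(a+b)/2+k+2} ds satisfies I₂ ≤ C / (x - y)². -/
/-!
After bounding `s ^ ((a - b + 2) / 2)` by `1`, the integral with `p = (a + b) / 2 + k` is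
elementary: the substitution `w = (1 - s) / (x² - y² s)` turns it into
`∫ w ^ (p - 1) (1 - y² w) dw / (x² - y²)²`, which leaves
`I₂ ≤ t ^ (a + k + 5/2) (x² + p (x² - y²)) / (x² - y²)²` with `t = y / x`. The term `x² / (x² - y²)²` is at most `1 / (x - y)²`, and the growth of `p` in `k`
in the other term is absorbed by `(k + 1) tᵏ (1 - t) ≤ 1`.
-/

open MeasureTheory Real Set

theorem add_one_mul_pow_mul_one_sub_le {t : ℝ} (ht₀ : 0 ≤ t) (ht₁ : t ≤ 1) (n : ℕ) :
    (n + 1) * t ^ n * (1 - t) ≤ 1 := by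
  calc (n + 1) * t ^ n * (1 - t) = ∑ _i ∈ Finset.range (n + 1), t ^ n * (1 - t) := by
        simp [mul_assoc]
    _ ≤ ∑ i ∈ Finset.range (n + 1), t ^ i * (1 - t) :=
        Finset.sum_le_sum fun i hi => mul_le_mul_of_nonneg_right
          (pow_le_pow_of_le_one ht₀ ht₁ (Finset.mem_range_succ_iff.mp hi)) (by linarith)
    _ = 1 - t ^ (n + 1) := by rw [← Finset.sum_mul, geom_sum_mul_neg]
    _ ≤ 1 := by linarith [pow_nonneg ht₀ (n + 1)]

theorem rpow_mul_add_div_sq_le {x y p q M : ℝ} {k : ℕ} (hy : 0 < y) (hxy : y < x) (hp : 0 ≤ p)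
    (hpM : p ≤ M * (k + 1)) (hkq : k ≤ q) :
    (y / x) ^ q * (x ^ 2 + p * (x ^ 2 - y ^ 2)) / (x ^ 2 - y ^ 2) ^ 2 ≤ (M + 1) / (x - y) ^ 2 := by
  have hx : 0 < x := hy.trans hxy
  have hxy' : 0 < x - y := sub_pos.2 hxy
  have ht₀ : 0 < y / x := div_pos hy hx
  have ht₁ : y / x < 1 := (div_lt_one hx).2 hxy
  have hA : x * (x - y) ≤ x ^ 2 - y ^ 2 := by nlinarith
  have hA' : 0 < x * (x - y) := mul_pos hx hxy'
  have hq : (y / x) ^ q ≤ (y / x) ^ k := by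
    rw [← rpow_natCast]; exact rpow_le_rpow_of_exponent_ge ht₀ ht₁.le hkq
  have hgeom : ((k : ℝ) + 1) * (y / x) ^ k * (x - y) ≤ x := by
    have := add_one_mul_pow_mul_one_sub_le ht₀.le ht₁.le k
    rwa [one_sub_div hx.ne', ← mul_div_assoc, div_le_one hx] at this
  have hpq : p * (y / x) ^ q * (x - y) ≤ M * x := by
    have hM : 0 ≤ M := by nlinarith
    calc p * (y / x) ^ q * (x - y) ≤ M * (((k : ℝ) + 1) * (y / x) ^ k * (x - y)) := by
          rw [← mul_assoc, ← mul_assoc]; gcongr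
      _ ≤ M * x := by gcongr
  calc (y / x) ^ q * (x ^ 2 + p * (x ^ 2 - y ^ 2)) / (x ^ 2 - y ^ 2) ^ 2
      = (y / x) ^ q * x ^ 2 / (x ^ 2 - y ^ 2) ^ 2 + p * (y / x) ^ q / (x ^ 2 - y ^ 2) := by
        have : x ^ 2 - y ^ 2 ≠ 0 := by nlinarith
        field_simp
    _ ≤ 1 * x ^ 2 / (x * (x - y)) ^ 2 + p * (y / x) ^ q / (x * (x - y)) := by
        gcongr
        exact rpow_le_one ht₀.le ht₁.le (by linarith [(k.cast_nonneg : (0 : ℝ) ≤ k)])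
    _ ≤ 1 / (x - y) ^ 2 + M / (x - y) ^ 2 := by
        refine add_le_add (by rw [mul_pow, one_mul, div_mul_cancel_left₀ (by positivity), one_div]) ?_
        rw [div_le_div_iff₀ hA' (by positivity)]
        nlinarith [mul_le_mul_of_nonneg_right hpq hxy'.le]
    _ = (M + 1) / (x - y) ^ 2 := by ring

theorem setIntegral_rpow_mul_le_of_nonneg {e : ℝ} {f : ℝ → ℝ} (he : 0 ≤ e)
    (hf : IntegrableOn f (Ioo 0 1)) (hf₀ : ∀ s ∈ Ioo (0 : ℝ) 1, 0 ≤ f s) :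
    ∫ s in Ioo 0 1, s ^ e * f s ≤ ∫ s in Ioo 0 1, f s := by
  refine integral_mono_of_nonneg ?_ hf ?_ <;>
    filter_upwards [ae_restrict_mem measurableSet_Ioo] with s hs
  · exact mul_nonneg (rpow_nonneg hs.1.le _) (hf₀ s hs)
  · exact mul_le_of_le_one_left (hf₀ s hs) (rpow_le_one hs.1.le hs.2.le he)

section OneSubRpowDivRpow

variable {c d p : ℝ}

theorem sub_mul_pos_of_mem_Icc (hc : 0 < c) (hdc : d < c) {s : ℝ} (hs : s ∈ Icc (0 : ℝ) 1) :
    0 < c - d * s := by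
  rcases le_total d 0 with hd | hd <;> nlinarith [hs.1, hs.2]

/-- With `w = (1 - s) / (c - d s)` one has `dw = -(c - d) ds / (c - d s)²` and
`1 - d w = (c - d) / (c - d s)`, so `(1 - s) ^ (p - 1) / (c - d s) ^ (p + 2) ds` becomes
`-w ^ (p - 1) (1 - d w) dw / (c - d)²`; this is a primitive of the latter. -/
noncomputable def oneSubRpowDivRpowPrimitive (p c d s : ℝ) : ℝ :=
  -(((1 - s) / (c - d * s)) ^ p / p - d * ((1 - s) / (c - d * s)) ^ (p + 1) / (p + 1)) /
    (c - d) ^ 2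

theorem hasDerivAt_oneSubRpowDivRpowPrimitive (hp : 0 < p) (hc : 0 < c) (hdc : d < c) {s : ℝ}
    (hs : s ∈ Ioo (0 : ℝ) 1) :
    HasDerivAt (oneSubRpowDivRpowPrimitive p c d)
      ((1 - s) ^ (p - 1) / (c - d * s) ^ (p + 2)) s := by
  have hD : 0 < c - d * s := sub_mul_pos_of_mem_Icc hc hdc (Ioo_subset_Icc_self hs)
  have hu : 0 < 1 - s := by linarith [hs.2]
  have hwpos : 0 < (1 - s) / (c - d * s) := div_pos hu hD
  have hw : HasDerivAt (fun s => (1 - s) / (c - d * s)) (-(c - d) / (c - d * s) ^ 2) s := by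
    refine (((hasDerivAt_id' s).const_sub 1).div ((hasDerivAt_id' s).const_mul d |>.const_sub c)
      hD.ne').congr_deriv ?_
    ring
  refine HasDerivAt.congr_deriv ((((hw.rpow_const (p := p) (Or.inl hwpos.ne')).div_const p).sub
    (((hw.rpow_const (p := p + 1) (Or.inl hwpos.ne')).const_mul d).div_const (p + 1))).neg.div_const
    ((c - d) ^ 2)) ?_
  set D := c - d * s
  set u := 1 - s
  have hpow : (u / D) ^ (p + 1 - 1) = (u / D) ^ (p - 1) * (u / D) := by
    rw [← rpow_add_one hwpos.ne']; ring_nf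
  have hpow' : D ^ (p + 2) = D ^ (p - 1) * D ^ 3 := by
    rw [← rpow_natCast, ← rpow_add hD]; norm_num; ring_nf
  rw [hpow, hpow', div_rpow hu.le hD.le]
  have : c - d ≠ 0 := by linarith
  have : p + 1 ≠ 0 := by linarith
  field_simp
  ring

theorem continuousOn_oneSubRpowDivRpowPrimitive (hp : 0 < p) (hc : 0 < c) (hdc : d < c) :
    ContinuousOn (oneSubRpowDivRpowPrimitive p c d) (Icc 0 1) := by
  have hw : ContinuousOn (fun s : ℝ => (1 - s) / (c - d * s)) (Icc 0 1) :=
    (continuousOn_const.sub continuousOn_id).div (continuousOn_const.sub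
      (continuousOn_const.mul continuousOn_id)) fun s hs => (sub_mul_pos_of_mem_Icc hc hdc hs).ne'
  exact (((hw.rpow_const fun _ _ => Or.inr hp.le).div_const p).sub
    (((hw.rpow_const fun _ _ => Or.inr (by linarith)).const_mul d).div_const _)).neg.div_const _

theorem integrableOn_one_sub_rpow_div_rpow (hp : 0 < p) (hc : 0 < c) (hdc : d < c) :
    IntegrableOn (fun s => (1 - s) ^ (p - 1) / (c - d * s) ^ (p + 2)) (Ioo 0 1) :=
  (intervalIntegral.integrableOn_deriv_of_nonneg (continuousOn_oneSubRpowDivRpowPrimitive hp hc hdc)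
    (fun _ hs => hasDerivAt_oneSubRpowDivRpowPrimitive hp hc hdc hs)
    (fun s hs => div_nonneg (rpow_nonneg (by linarith [hs.2]) _)
      (rpow_nonneg (sub_mul_pos_of_mem_Icc hc hdc (Ioo_subset_Icc_self hs)).le _))).mono_set
    Ioo_subset_Ioc_self

theorem integral_one_sub_rpow_div_rpow (hp : 0 < p) (hc : 0 < c) (hdc : d < c) :
    ∫ s in Ioo 0 1, (1 - s) ^ (p - 1) / (c - d * s) ^ (p + 2) =
      (c + p * (c - d)) / (p * (p + 1) * (c - d) ^ 2 * c ^ (p + 1)) := by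
  rw [← integral_Ioc_eq_integral_Ioo, ← intervalIntegral.integral_of_le zero_le_one,
    intervalIntegral.integral_eq_sub_of_hasDerivAt_of_le zero_le_one
      (continuousOn_oneSubRpowDivRpowPrimitive hp hc hdc)
      (fun _ hs => hasDerivAt_oneSubRpowDivRpowPrimitive hp hc hdc hs)
      ((intervalIntegrable_iff_integrableOn_Ioo_of_le zero_le_one).2
        (integrableOn_one_sub_rpow_div_rpow hp hc hdc))]
  have : c - d ≠ 0 := by linarith
  simp only [oneSubRpowDivRpowPrimitive, sub_self, zero_div, zero_rpow hp.ne',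
    zero_rpow (by linarith : p + 1 ≠ 0), mul_zero, mul_one, sub_zero, one_div, inv_rpow hc.le,
    rpow_add_one hc.ne']
  field_simp
  ring

end OneSubRpowDivRpow

theorem I2_bound_general (a b : ℝ) (ha : -1 / 2 ≤ a) (hb : -1 / 2 ≤ b)
    (hab' : |a - b| ≤ 1) :
    ∃ C : ℝ, ∀ (k : ℕ), 10 ≤ k → ∀ x y : ℝ, 0 < y → y < x →
      ((a + b) / 2 + k) * ((a + b) / 2 + k + 1) * x ^ (b + k - 1 / 2) * y ^ (a + k + 5 / 2) *
          (∫ s in Set.Ioo (0 : ℝ) 1,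
            s ^ ((a - b + 2) / 2) * (1 - s) ^ ((a + b) / 2 + k - 1) /
              (x ^ 2 - y ^ 2 * s) ^ ((a + b) / 2 + k + 2)) ≤
        C / (x - y) ^ 2 := by
  refine ⟨|a + b| / 2 + 2, fun k hk x y hy hxy => ?_⟩
  set p := (a + b) / 2 + (k : ℝ) with hp_def
  have hk' : (10 : ℝ) ≤ k := by exact_mod_cast hk
  have hp : 0 < p := by linarith
  have hx : 0 < x := hy.trans hxy
  have hyx : y ^ 2 < x ^ 2 := by gcongr
  have hc : 0 < x ^ 2 := by positivity
  have hf₀ : ∀ s ∈ Ioo (0 : ℝ) 1, 0 ≤ (1 - s) ^ (p - 1) / (x ^ 2 - y ^ 2 * s) ^ (p + 2) :=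
    fun s hs => div_nonneg (rpow_nonneg (by linarith [hs.2]) _)
      (rpow_nonneg (sub_mul_pos_of_mem_Icc hc hyx (Ioo_subset_Icc_self hs)).le _)
  calc _ ≤ p * (p + 1) * x ^ (b + k - 1 / 2) * y ^ (a + k + 5 / 2) *
        ∫ s in Ioo 0 1, (1 - s) ^ (p - 1) / (x ^ 2 - y ^ 2 * s) ^ (p + 2) := by
        simp_rw [mul_div_assoc]
        refine mul_le_mul_of_nonneg_left (setIntegral_rpow_mul_le_of_nonneg ?_
          (integrableOn_one_sub_rpow_div_rpow hp hc hyx) hf₀) (by positivity)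
        linarith [neg_abs_le (a - b)]
    _ = (y / x) ^ (a + k + 5 / 2) * (x ^ 2 + p * (x ^ 2 - y ^ 2)) / (x ^ 2 - y ^ 2) ^ 2 := by
        rw [integral_one_sub_rpow_div_rpow hp hc hyx, ← rpow_natCast, ← rpow_mul hx.le,
          show b + k - 1 / 2 = (2 : ℕ) * (p + 1) - (a + k + 5 / 2) by push_cast; ring,
          rpow_sub hx, div_rpow hy.le hx.le]
        field_simp
    _ ≤ (|a + b| / 2 + 1 + 1) / (x - y) ^ 2 :=
        rpow_mul_add_div_sq_le (k := k) hy hxy hp.le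
          (by nlinarith [hp_def, le_abs_self (a + b), abs_nonneg (a + b)]) (by linarith)
    _ = (|a + b| / 2 + 2) / (x - y) ^ 2 := by ring

/-- Uniform bound for the term `I₂` arising when differentiating in `x` the integral
representation of the Hankel transplantation kernel `K_{a+k}^{b+k}(x,y)` for `0 < y < x`:
`I₂ ≤ C / (x-y)²` with `C` independent of `k ≥ 10`. -/
theorem I2_bound (a b : ℝ) (ha : -1 / 2 ≤ a) (hb : -1 / 2 ≤ b)
    (hab : 0 < |a - b|) (hab' : |a - b| ≤ 1) :
    ∃ C : ℝ, ∀ (k : ℕ), 10 ≤ k → ∀ x y : ℝ, 0 < y → y < x →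
      ((a + b) / 2 + k) * ((a + b) / 2 + k + 1) * x ^ (b + k - 1 / 2) * y ^ (a + k + 5 / 2) *
          (∫ s in Set.Ioo (0 : ℝ) 1,
            s ^ ((a - b + 2) / 2) * (1 - s) ^ ((a + b) / 2 + k - 1) /
              (x ^ 2 - y ^ 2 * s) ^ ((a + b) / 2 + k + 2)) ≤
        C / (x - y) ^ 2 :=
  I2_bound_general a b ha hb hab'
end

section
/- Let a, b ≥ -1/2 with 0 < |a - b| ≤ 1. Then there exists a constant C, depending only on a and b, such that for every integer k ≥ 10 and all 0 < y < x, I₂ ≤ C · [((a+b)/2 + k)((a+b)/2 + k + 1) / (a/2 + k/2 + 5/4)²] · x² / (x² - y²)², where I₂ = ((a+b)/2 + k)((a+b)/2 + k + 1) x^{b+k-1/2} y^{a+k+5/2} ∫_0^1 s^{(a-b+2)/2} (1-s)^{(a+b)/2+k-1} / (x² - y² s)^{(a+b)/2+k+2} ds. -/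
/-!
Since `a - b ≥ -1`, the factor `s ^ ((a - b + 2) / 2)` is at most `1`. What remains,
`∫₀¹ (1 - s) ^ (P - 1) / (x² - y² s) ^ (P + 2) ds` with `P = (a + b) / 2 + k`, is elementary:
in the variable `w = (1 - s) / (x² - y² s)` it has a primitive that is a combination of `w ^ P`
and `w ^ (P + 1)`, and its value is `(x² + P (x² - y²)) / (P (P + 1) x ^ (2P + 2) (x² - y²)²)`.
This bounds `I₂` by `ρ ^ E (1 + P (1 - ρ²)) x² / (x² - y²)²` with `ρ = y / x`, `E = a + k + 5/2`.
Finally `ρ ^ E = (1 - u) ^ (E / 2) ≤ exp (-u E / 2)` for `u = 1 - ρ²`, and `t e^{-t} ≤ 1` gives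
`ρ ^ E u E ≤ 2`; together with `E ≤ 2P` this yields the bound with `C = 2`.
-/

open MeasureTheory Real Set

section BetaTypeIntegral

variable {A B P : ℝ}

lemma sub_mul_pos_of_mem_Icc_s16 (hA : 0 < A) (hBA : B < A) {s : ℝ} (hs : s ∈ Icc (0 : ℝ) 1) :
    0 < A - B * s := by
  rcases le_or_gt B 0 with hB | hB <;> nlinarith [hs.1, hs.2]

lemma hasDerivAt_one_sub_rpow_div_rpow_primitive (hP : P ≠ 0) (hP₁ : P + 1 ≠ 0) (hAB : A ≠ B)
    {s : ℝ} (hs : s < 1) (hden : 0 < A - B * s) :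
    HasDerivAt (fun t ↦ -((A - B) ^ 2)⁻¹ * (((1 - t) / (A - B * t)) ^ P / P
        - B * ((1 - t) / (A - B * t)) ^ (P + 1) / (P + 1)))
      ((1 - s) ^ (P - 1) / (A - B * s) ^ (P + 2)) s := by
  set w := (1 - s) / (A - B * s)
  have hw : 0 < w := div_pos (by linarith) hden
  have hw' : HasDerivAt (fun t ↦ (1 - t) / (A - B * t)) (-(A - B) / (A - B * s) ^ 2) s := by
    refine (((hasDerivAt_id' s).const_sub 1).div
      (((hasDerivAt_id' s).const_mul B).const_sub A) hden.ne').congr_deriv ?_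
    field_simp
    ring
  refine ((((hw'.rpow_const (p := P) (.inl hw.ne')).div_const P).sub
    (((hw'.rpow_const (p := P + 1) (.inl hw.ne')).const_mul B).div_const (P + 1))).const_mul
    (-((A - B) ^ 2)⁻¹)).congr_deriv ?_
  have hsplit : (A - B * s) ^ (P + 2) = (A - B * s) ^ (P - 1) * (A - B * s) ^ 3 := by
    rw [← rpow_natCast, ← rpow_add hden]; norm_num; ring_nf
  rw [show P + 1 - 1 = P - 1 + 1 by ring, rpow_add_one hw.ne', div_rpow (by linarith) hden.le,
    hsplit]
  have : A - B ≠ 0 := sub_ne_zero.2 hAB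
  have : (A - B * s) ^ (P - 1) ≠ 0 := (rpow_pos_of_pos hden _).ne'
  simp only [w]
  field_simp
  ring

lemma continuousOn_one_sub_rpow_div_rpow (hA : 0 < A) (hBA : B < A) (hP : 1 ≤ P) :
    ContinuousOn (fun s ↦ (1 - s) ^ (P - 1) / (A - B * s) ^ (P + 2)) (Icc 0 1) := by
  refine ContinuousOn.div ?_ ?_ fun s hs ↦
    (rpow_pos_of_pos (sub_mul_pos_of_mem_Icc_s16 hA hBA hs) _).ne'
  · exact (continuous_const.sub continuous_id).continuousOn.rpow_const fun _ _ ↦ .inr (by linarith)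
  · exact (continuous_const.sub (continuous_const.mul continuous_id)).continuousOn.rpow_const
      fun s hs ↦ .inl (sub_mul_pos_of_mem_Icc_s16 hA hBA hs).ne'

lemma integrableOn_one_sub_rpow_div_rpow_s16 (hA : 0 < A) (hBA : B < A) (hP : 1 ≤ P) :
    IntegrableOn (fun s ↦ (1 - s) ^ (P - 1) / (A - B * s) ^ (P + 2)) (Ioo 0 1) :=
  ((continuousOn_one_sub_rpow_div_rpow hA hBA hP).integrableOn_Icc).mono_set Ioo_subset_Icc_self

lemma integral_one_sub_rpow_div_rpow_s16 (hA : 0 < A) (hBA : B < A) (hP : 1 ≤ P) :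
    ∫ s in Ioo 0 1, (1 - s) ^ (P - 1) / (A - B * s) ^ (P + 2) =
      (A + P * (A - B)) / (P * (P + 1) * A ^ (P + 1) * (A - B) ^ 2) := by
  rw [← integral_Ioc_eq_integral_Ioo, ← intervalIntegral.integral_of_le zero_le_one,
    intervalIntegral.integral_eq_sub_of_hasDerivAt_of_le zero_le_one _
      (fun s hs ↦ hasDerivAt_one_sub_rpow_div_rpow_primitive (by linarith) (by linarith)
        hBA.ne' hs.2 (sub_mul_pos_of_mem_Icc_s16 hA hBA (Ioo_subset_Icc_self hs)))
      ((continuousOn_one_sub_rpow_div_rpow hA hBA hP).intervalIntegrable_of_Icc zero_le_one)]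
  · have : A - B ≠ 0 := sub_ne_zero.2 hBA.ne'
    have : A ^ P ≠ 0 := (rpow_pos_of_pos hA P).ne'
    simp only [sub_self, zero_div, mul_zero, sub_zero, one_div, zero_rpow (by linarith : P ≠ 0),
      zero_rpow (by linarith : P + 1 ≠ 0), inv_rpow hA.le, rpow_add_one hA.ne']
    field_simp
    ring
  · have hw : ContinuousOn (fun t : ℝ ↦ (1 - t) / (A - B * t)) (Icc 0 1) :=
      (continuous_const.sub continuous_id).continuousOn.div
        (continuous_const.sub (continuous_const.mul continuous_id)).continuousOn
        fun s hs ↦ (sub_mul_pos_of_mem_Icc_s16 hA hBA hs).ne'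
    exact continuousOn_const.mul (((hw.rpow_const fun _ _ ↦ .inr (by linarith)).div_const _).sub
      ((continuousOn_const.mul (hw.rpow_const fun _ _ ↦ .inr (by linarith))).div_const _))

lemma setIntegral_rpow_mul_le {f : ℝ → ℝ} {α : ℝ} (hα : 0 ≤ α) (hf : IntegrableOn f (Ioo 0 1))
    (hf₀ : ∀ s ∈ Ioo (0 : ℝ) 1, 0 ≤ f s) :
    ∫ s in Ioo 0 1, s ^ α * f s ≤ ∫ s in Ioo 0 1, f s := by
  refine integral_mono_of_nonneg ?_ hf ?_ <;>
    filter_upwards [ae_restrict_mem measurableSet_Ioo] with s hs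
  · exact mul_nonneg (rpow_nonneg hs.1.le α) (hf₀ s hs)
  · exact mul_le_of_le_one_left (hf₀ s hs) (rpow_le_one hs.1.le hs.2.le hα)

end BetaTypeIntegral

lemma rpow_mul_one_sub_sq_mul_le_two {ρ E : ℝ} (hρ₀ : 0 ≤ ρ) (hρ₁ : ρ ≤ 1) (hE : 0 ≤ E) :
    ρ ^ E * (1 - ρ ^ 2) * E ≤ 2 := by
  set t := (1 - ρ ^ 2) * E / 2
  have ht : 0 ≤ t := by have : ρ ^ 2 ≤ 1 := pow_le_one₀ hρ₀ hρ₁; positivity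
  have hρE : ρ ^ E ≤ exp (-t) := calc
    ρ ^ E = (1 - (1 - ρ ^ 2)) ^ (E / 2) := by
      rw [sub_sub_cancel, ← rpow_natCast, ← rpow_mul hρ₀]; congr 1; push_cast; ring
    _ ≤ exp (-(1 - ρ ^ 2)) ^ (E / 2) := by
      gcongr
      · nlinarith
      · exact one_sub_le_exp_neg _
    _ = exp (-t) := by rw [← exp_mul]; congr 1; ring
  calc ρ ^ E * (1 - ρ ^ 2) * E = 2 * (t * ρ ^ E) := by ring
    _ ≤ 2 * (t * exp (-t)) := by gcongr
    _ ≤ 2 * exp (-1) := by gcongr; exact mul_exp_neg_le_exp_neg_one t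
    _ ≤ 2 := by linarith [exp_neg_one_lt_half]

lemma rpow_mul_one_add_mul_one_sub_sq_le {ρ E P : ℝ} (hρ₀ : 0 ≤ ρ) (hρ₁ : ρ ≤ 1) (hE : 0 < E)
    (hEP : E ≤ 2 * P) : ρ ^ E * (1 + P * (1 - ρ ^ 2)) ≤ 8 * P ^ 2 / E ^ 2 := by
  have h₁ : ρ ^ E * E ^ 2 ≤ 4 * P ^ 2 := by
    have : E ^ 2 ≤ 4 * P ^ 2 := by nlinarith
    nlinarith [rpow_le_one hρ₀ hρ₁ hE.le, rpow_nonneg hρ₀ E]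
  have h₂ : ρ ^ E * (1 - ρ ^ 2) * E * (P * E) ≤ 2 * (P * E) :=
    mul_le_mul_of_nonneg_right (rpow_mul_one_sub_sq_mul_le_two hρ₀ hρ₁ hE.le) (by nlinarith)
  rw [le_div_iff₀ (by positivity)]
  nlinarith

theorem I2_refined_bound_general (a b : ℝ) (ha : -1 / 2 ≤ a) (hb : -1 / 2 ≤ b)
    (hab' : |a - b| ≤ 1) :
    ∃ C : ℝ, ∀ (k : ℕ), 10 ≤ k → ∀ x y : ℝ, 0 < y → y < x →
      ((a + b) / 2 + k) * ((a + b) / 2 + k + 1) * x ^ (b + k - 1 / 2) * y ^ (a + k + 5 / 2) *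
          (∫ s in Set.Ioo (0 : ℝ) 1,
            s ^ ((a - b + 2) / 2) * (1 - s) ^ ((a + b) / 2 + k - 1) /
              (x ^ 2 - y ^ 2 * s) ^ ((a + b) / 2 + k + 2)) ≤
        C * (((a + b) / 2 + k) * ((a + b) / 2 + k + 1) / (a / 2 + k / 2 + 5 / 4) ^ 2) *
          (x ^ 2 / (x ^ 2 - y ^ 2) ^ 2) := by
  refine ⟨2, fun k hk x y hy hyx ↦ ?_⟩
  have hk' : (10 : ℝ) ≤ k := by exact_mod_cast hk
  have hx : 0 < x := hy.trans hyx
  have hyx2 : y ^ 2 < x ^ 2 := by gcongr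
  have hA : 0 < x ^ 2 := by positivity
  have hα : 0 ≤ (a - b + 2) / 2 := by linarith [(abs_le.1 hab').1]
  have hP : 1 ≤ (a + b) / 2 + (k : ℝ) := by linarith
  have hE : 0 < a + (k : ℝ) + 5 / 2 := by linarith
  have hEP : a + (k : ℝ) + 5 / 2 ≤ 2 * ((a + b) / 2 + k) := by linarith
  set P := (a + b) / 2 + (k : ℝ)
  set E := a + (k : ℝ) + 5 / 2
  have hI : ∫ s in Ioo 0 1,
        s ^ ((a - b + 2) / 2) * (1 - s) ^ (P - 1) / (x ^ 2 - y ^ 2 * s) ^ (P + 2) ≤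
      (x ^ 2 + P * (x ^ 2 - y ^ 2)) / (P * (P + 1) * (x ^ 2) ^ (P + 1) * (x ^ 2 - y ^ 2) ^ 2) := by
    simp only [mul_div_assoc]
    rw [← integral_one_sub_rpow_div_rpow_s16 hA hyx2 hP]
    exact setIntegral_rpow_mul_le hα (integrableOn_one_sub_rpow_div_rpow_s16 hA hyx2 hP) fun s hs ↦
      div_nonneg (rpow_nonneg (by linarith [hs.2]) _)
        (rpow_nonneg (sub_mul_pos_of_mem_Icc_s16 hA hyx2 (Ioo_subset_Icc_self hs)).le _)
  have hxE : x ^ (b + k - 1 / 2) * y ^ E / (x ^ 2) ^ (P + 1) = (y / x) ^ E := by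
    rw [← rpow_natCast, ← rpow_mul hx.le, div_rpow hy.le hx.le,
      show (2 : ℕ) * (P + 1) = b + k - 1 / 2 + E by push_cast; ring, rpow_add hx]
    have : 0 < x ^ (b + k - 1 / 2) := by positivity
    field_simp
  calc _ ≤ P * (P + 1) * x ^ (b + k - 1 / 2) * y ^ E * ((x ^ 2 + P * (x ^ 2 - y ^ 2)) /
        (P * (P + 1) * (x ^ 2) ^ (P + 1) * (x ^ 2 - y ^ 2) ^ 2)) := by gcongr
    _ = (y / x) ^ E * (1 + P * (1 - (y / x) ^ 2)) * (x ^ 2 / (x ^ 2 - y ^ 2) ^ 2) := by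
        rw [← hxE]
        have : x ^ 2 - y ^ 2 ≠ 0 := by linarith
        field_simp
    _ ≤ 8 * P ^ 2 / E ^ 2 * (x ^ 2 / (x ^ 2 - y ^ 2) ^ 2) := by
        gcongr
        exact rpow_mul_one_add_mul_one_sub_sq_le (by positivity) ((div_le_one hx).2 hyx.le) hE hEP
    _ ≤ _ := by
        rw [show a / 2 + k / 2 + 5 / 4 = E / 2 by ring]
        gcongr ?_ * _
        rw [div_le_iff₀ (by positivity)]
        field_simp
        nlinarith

/-- Refined bound for the term `I₂` arising when differentiating in `x` the integral
representation of the Hankel transplantation kernel `K_{a+k}^{b+k}(x,y)` for `0 < y < x`: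
`I₂ ≤ C (((a+b)/2+k)((a+b)/2+k+1)/(a/2+k/2+5/4)²) x²/(x²-y²)²` with `C` independent of
`k ≥ 10`. -/
theorem I2_refined_bound (a b : ℝ) (ha : -1 / 2 ≤ a) (hb : -1 / 2 ≤ b)
    (hab : 0 < |a - b|) (hab' : |a - b| ≤ 1) :
    ∃ C : ℝ, ∀ (k : ℕ), 10 ≤ k → ∀ x y : ℝ, 0 < y → y < x →
      ((a + b) / 2 + k) * ((a + b) / 2 + k + 1) * x ^ (b + k - 1 / 2) * y ^ (a + k + 5 / 2) *
          (∫ s in Set.Ioo (0 : ℝ) 1,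
            s ^ ((a - b + 2) / 2) * (1 - s) ^ ((a + b) / 2 + k - 1) /
              (x ^ 2 - y ^ 2 * s) ^ ((a + b) / 2 + k + 2)) ≤
        C * (((a + b) / 2 + k) * ((a + b) / 2 + k + 1) / (a / 2 + k / 2 + 5 / 4) ^ 2) *
          (x ^ 2 / (x ^ 2 - y ^ 2) ^ 2) :=
  I2_refined_bound_general a b ha hb hab'
end
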